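/- arXiv:1301.4786 — 7 statements merged into one kernel-verified Lean document; each statement's English description precedes it below -/
import Mathlib

section
/- (Claim 2 in the proof of Proposition 6.) Suppose 0 < α ≤ 1, 0 < β ≤ 1, E₁(t) ≥ 0 and E₂(t) ≤ 0 for all t ∈ {k,…,N}, and Δ ≥ 0 satisfies Δ ≤ min{(S_max − σ₁)/α, α·σ₂/β}. Then J*_k(σ₁, σ₂) ≤ J*_k(σ₁ + α·Δ, σ₂ − β·Δ/α). -/
/-- A feasible policy for the two-base-station energy cooperation problem over
slots `t ∈ {k, …, N}` from initial storage state `(σ₁, σ₂)`. -/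
def Feasible (α β Smax : ℝ) (k N : ℕ) (E₁ E₂ : ℕ → ℝ) (σ₁ σ₂ : ℝ)
    (w₁ w₂ c₁ c₂ d₁ d₂ x₁₂ x₂₁ s₁ s₂ : ℕ → ℝ) : Prop :=
  s₁ k = σ₁ ∧ s₂ k = σ₂ ∧
  (∀ t ∈ Finset.Icc k N,
    0 ≤ w₁ t ∧ 0 ≤ w₂ t ∧ 0 ≤ c₁ t ∧ 0 ≤ c₂ t ∧ 0 ≤ d₁ t ∧ 0 ≤ d₂ t ∧
      0 ≤ x₁₂ t ∧ 0 ≤ x₂₁ t ∧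
      s₁ (t + 1) = s₁ t + α * c₁ t - d₁ t ∧
      s₂ (t + 1) = s₂ t + α * c₂ t - d₂ t ∧
      d₁ t ≤ s₁ t ∧ d₂ t ≤ s₂ t ∧
      0 ≤ E₁ t + w₁ t - c₁ t + α * d₁ t - x₁₂ t + β * x₂₁ t ∧
      0 ≤ E₂ t + w₂ t - c₂ t + α * d₂ t - x₂₁ t + β * x₁₂ t) ∧
  (∀ t ∈ Finset.Icc k (N + 1),
    0 ≤ s₁ t ∧ s₁ t ≤ Smax ∧ 0 ≤ s₂ t ∧ s₂ t ≤ Smax)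

/-- Optimal cost `J*_k(σ₁, σ₂)`: the infimum of total grid draw over feasible policies. -/
noncomputable def Jstar (α β Smax : ℝ) (k N : ℕ) (E₁ E₂ : ℕ → ℝ) (σ₁ σ₂ : ℝ) : ℝ :=
  sInf {r : ℝ | ∃ w₁ w₂ c₁ c₂ d₁ d₂ x₁₂ x₂₁ s₁ s₂ : ℕ → ℝ,
    Feasible α β Smax k N E₁ E₂ σ₁ σ₂ w₁ w₂ c₁ c₂ d₁ d₂ x₁₂ x₂₁ s₁ s₂ ∧
    (∑ t ∈ Finset.Icc k N, (w₁ t + w₂ t)) = r}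

/-!
Take any feasible policy from the richer state `(σ₁ + α Δ, σ₂ - β Δ / α)` and repair it slot by
slot into a policy from `(σ₁, σ₂)`. The invariant is that storage 1 lags by `a ≥ 0`, storage 2
leads by `b ≥ 0`, and a grid budget `m ≥ 0` is left with `β a ≤ α b + m`; initially `m = 0`
works because `α ≤ 1`. When storage 1 cannot afford a planned discharge, station 1 (which has
`E₁ ≥ 0`) recovers the lost energy by charging or exporting less, and station 2 replaces the
missing import from its surplus or the budget. If the surplus would
overflow storage 2, station 2 charges less and, since `E₂ ≤ 0`, the spared energy replaces grid
energy or imports, which lets station 1 refill storage 1.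
-/

open Finset

structure Decision where
  (w₁ w₂ c₁ c₂ d₁ d₂ x₁₂ x₂₁ : ℝ)

namespace Decision

variable (α β : ℝ)

def cost (u : Decision) : ℝ := u.w₁ + u.w₂

def next₁ (s₁ : ℝ) (u : Decision) : ℝ := s₁ + α * u.c₁ - u.d₁

def next₂ (s₂ : ℝ) (u : Decision) : ℝ := s₂ + α * u.c₂ - u.d₂

def balance₁ (e₁ : ℝ) (u : Decision) : ℝ := e₁ + u.w₁ - u.c₁ + α * u.d₁ - u.x₁₂ + β * u.x₂₁

def balance₂ (e₂ : ℝ) (u : Decision) : ℝ := e₂ + u.w₂ - u.c₂ + α * u.d₂ - u.x₂₁ + β * u.x₁₂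

structure Admissible (e₁ e₂ s₁ s₂ : ℝ) (u : Decision) : Prop where
  w₁_nonneg : 0 ≤ u.w₁
  w₂_nonneg : 0 ≤ u.w₂
  c₁_nonneg : 0 ≤ u.c₁
  c₂_nonneg : 0 ≤ u.c₂
  d₁_nonneg : 0 ≤ u.d₁
  d₂_nonneg : 0 ≤ u.d₂
  x₁₂_nonneg : 0 ≤ u.x₁₂
  x₂₁_nonneg : 0 ≤ u.x₂₁
  d₁_le : u.d₁ ≤ s₁
  d₂_le : u.d₂ ≤ s₂
  balance₁_nonneg : 0 ≤ u.balance₁ α β e₁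
  balance₂_nonneg : 0 ≤ u.balance₂ α β e₂

def idle (e₁ e₂ : ℝ) : Decision := ⟨|e₁|, |e₂|, 0, 0, 0, 0, 0, 0⟩

theorem idle_admissible {e₁ e₂ s₁ s₂ : ℝ} (h₁ : 0 ≤ s₁) (h₂ : 0 ≤ s₂) :
    (idle e₁ e₂).Admissible α β e₁ e₂ s₁ s₂ where
  w₁_nonneg := abs_nonneg e₁
  w₂_nonneg := abs_nonneg e₂
  c₁_nonneg := le_rfl
  c₂_nonneg := le_rfl
  d₁_nonneg := le_rfl
  d₂_nonneg := le_rfl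
  x₁₂_nonneg := le_rfl
  x₂₁_nonneg := le_rfl
  d₁_le := h₁
  d₂_le := h₂
  balance₁_nonneg := by simp only [balance₁, idle]; linarith [neg_abs_le e₁]
  balance₂_nonneg := by simp only [balance₂, idle]; linarith [neg_abs_le e₂]

end Decision

/-- Storage state `(p₁, p₂)` plus a grid budget `m` is no worse than `(r₁, r₂)`: a unit missing
from storage 1 is worth at most `β` units of grid energy, a unit in excess in storage 2 at
least `α`. -/
structure Compensates (α β m p₁ p₂ r₁ r₂ : ℝ) : Prop where
  p₁_nonneg : 0 ≤ p₁
  p₁_le : p₁ ≤ r₁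
  r₂_le : r₂ ≤ p₂
  budget_nonneg : 0 ≤ m
  exchange : β * (r₁ - p₁) ≤ α * (p₂ - r₂) + m

theorem exists_split_of_le_add {x a b : ℝ} (hx : 0 ≤ x) (ha : 0 ≤ a) (hb : 0 ≤ b)
    (h : x ≤ a + b) : ∃ y, 0 ≤ y ∧ y ≤ a ∧ y ≤ x ∧ x - y ≤ b := by
  refine ⟨min x a, le_min hx ha, min_le_right .., min_le_left .., ?_⟩
  rcases min_cases x a with ⟨hy, -⟩ | ⟨hy, -⟩ <;> rw [hy] <;> linarith

namespace Decision.Admissible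

open Decision

variable {α β e₁ e₂ : ℝ}

theorem exists_discharge_repair (hα : 0 < α) (hα₁ : α ≤ 1) (hβ : 0 ≤ β) (he₁ : 0 ≤ e₁)
    {r₁ r₂ p₁ p₂ m : ℝ} {u : Decision} (hu : u.Admissible α β e₁ e₂ r₁ r₂)
    (h : Compensates α β m p₁ p₂ r₁ r₂) :
    ∃ (v : Decision) (m' : ℝ), v.Admissible α β e₁ e₂ p₁ p₂ ∧
      Compensates α β m' (v.next₁ α p₁) (v.next₂ α p₂) (u.next₁ α r₁) (u.next₂ α r₂) ∧
      v.cost + m' ≤ u.cost + m := by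
  -- Storage 1 discharges `δ` less; station 1 makes up for the lost `α δ` by charging `ε` less,
  -- sending `ρ` less to station 2 and using its slack, and station 2 replaces the missing `β ρ`
  -- by discharging `y / α` more from its surplus and buying the rest.
  set δ := max 0 (u.d₁ - p₁)
  have hδ : 0 ≤ δ := le_max_left ..
  have hδd : δ ≤ u.d₁ := max_le hu.d₁_nonneg (by linarith [h.p₁_nonneg])
  have hδr : δ ≤ r₁ - p₁ := max_le (by linarith [h.p₁_le]) (by linarith [hu.d₁_le])
  have hδp : u.d₁ - p₁ ≤ δ := le_max_right ..
  have hbal₁ := hu.balance₁_nonneg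
  have hlost : α * δ ≤ u.c₁ + (u.x₁₂ + u.balance₁ α β e₁) := by
    have : α * δ ≤ α * u.d₁ := mul_le_mul_of_nonneg_left hδd hα.le
    simp only [balance₁]
    linarith [hu.w₁_nonneg, mul_nonneg hβ hu.x₂₁_nonneg]
  obtain ⟨ε, hε, hεc, hεδ, hrest⟩ := exists_split_of_le_add (mul_nonneg hα.le hδ)
    hu.c₁_nonneg (add_nonneg hu.x₁₂_nonneg hbal₁) hlost
  obtain ⟨ρ, hρ, hρx, hρε, hslack⟩ :=
    exists_split_of_le_add (sub_nonneg.2 hεδ) hu.x₁₂_nonneg hbal₁ (by linarith)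
  have hρδ : ρ + α * ε ≤ δ := by
    linarith [mul_le_of_le_one_left hε hα₁, mul_le_of_le_one_left hδ hα₁]
  have hβρ : β * ρ ≤ α * (p₂ - r₂) + m :=
    (mul_le_mul_of_nonneg_left (by linarith [mul_nonneg hα.le hε]) hβ).trans h.exchange
  obtain ⟨y, hy, hyp, hyρ, hym⟩ := exists_split_of_le_add (mul_nonneg hβ hρ)
    (mul_nonneg hα.le (sub_nonneg.2 h.r₂_le)) h.budget_nonneg hβρ
  have hαy : α * (y / α) = y := mul_div_cancel₀ _ hα.ne'
  have hyp' : y / α ≤ p₂ - r₂ := (div_le_iff₀' hα).2 hyp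
  have hbal₂ := hu.balance₂_nonneg
  refine ⟨⟨u.w₁, u.w₂ + (β * ρ - y), u.c₁ - ε, u.c₂, u.d₁ - δ, u.d₂ + y / α, u.x₁₂ - ρ, u.x₂₁⟩,
    m - (β * ρ - y),
    ⟨hu.w₁_nonneg, ?_, ?_, hu.c₂_nonneg, ?_, ?_, ?_, hu.x₂₁_nonneg, ?_, ?_, ?_, ?_⟩,
    ⟨?_, ?_, ?_, ?_, ?_⟩, ?_⟩
  all_goals simp only [balance₁, balance₂, next₁, next₂, cost] at hslack hbal₂ ⊢
  · linarith [hu.w₂_nonneg]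
  · linarith
  · linarith
  · linarith [hu.d₂_nonneg, div_nonneg hy hα.le]
  · linarith
  · linarith
  · linarith [hu.d₂_le]
  · linarith
  · linarith
  · linarith [mul_le_mul_of_nonneg_left hεc hα.le]
  · linarith [mul_nonneg hα.le hε]
  · linarith
  · linarith
  · linarith [h.exchange, mul_le_mul_of_nonneg_left hρδ hβ]
  · linarith

theorem overflow_le (hα : 0 ≤ α) (hα₁ : α ≤ 1) (hβ : 0 ≤ β) (he₂ : e₂ ≤ 0)
    {s₁ s₂ Smax : ℝ} {v : Decision} (hv : v.Admissible α β e₁ e₂ s₁ s₂) (hs₂ : s₂ ≤ Smax) :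
    max 0 (v.next₂ α s₂ - Smax) ≤ α * v.c₂ ∧
      max 0 (v.next₂ α s₂ - Smax) ≤ α * (β * v.x₁₂ + v.w₂) := by
  have hbal₂ := hv.balance₂_nonneg
  simp only [balance₂] at hbal₂
  have : α * v.c₂ ≤ α * (v.w₂ + α * v.d₂ + β * v.x₁₂) :=
    mul_le_mul_of_nonneg_left (by linarith [hv.x₂₁_nonneg]) hα
  have : α * α * v.d₂ ≤ v.d₂ := mul_le_of_le_one_left hv.d₂_nonneg (mul_le_one₀ hα₁ hα hα₁)
  simp only [next₂]
  exact ⟨max_le (mul_nonneg hα hv.c₂_nonneg) (by linarith [hv.d₂_nonneg]),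
    max_le (mul_nonneg hα (add_nonneg (mul_nonneg hβ hv.x₁₂_nonneg) hv.w₂_nonneg))
      (by linarith [hv.d₂_nonneg])⟩

theorem exists_overflow_repair (hα : 0 < α) (hα₁ : α ≤ 1) (hβ : 0 < β) (he₂ : e₂ ≤ 0)
    {p₁ p₂ r₁ r₂ m Smax : ℝ} {v : Decision} (hv : v.Admissible α β e₁ e₂ p₁ p₂)
    (hp₂ : p₂ ≤ Smax) (hr₂ : r₂ ≤ Smax)
    (h : Compensates α β m (v.next₁ α p₁) (v.next₂ α p₂) r₁ r₂) :
    ∃ (v' : Decision) (m' : ℝ), v'.Admissible α β e₁ e₂ p₁ p₂ ∧ v'.next₂ α p₂ ≤ Smax ∧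
      Compensates α β m' (v'.next₁ α p₁) (v'.next₂ α p₂) r₁ r₂ ∧ v'.cost + m' ≤ v.cost + m := by
  -- Storage 2 charges `o / α` less to stay below `Smax`; station 2 uses the spared energy to
  -- receive `y` less from station 1 and to buy less, and station 1 charges `g` of the `y / β`
  -- it keeps.
  obtain ⟨hoc, how⟩ := hv.overflow_le hα.le hα₁ hβ.le he₂ hp₂
  set q₁ := v.next₁ α p₁ with hq₁
  set q₂ := v.next₂ α p₂ with hq₂
  set o := max 0 (q₂ - Smax)
  have hbal₁ := hv.balance₁_nonneg
  have hbal₂ := hv.balance₂_nonneg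
  simp only [next₁, next₂, balance₁, balance₂] at hq₁ hq₂ hbal₁ hbal₂
  have ho : 0 ≤ o := le_max_left ..
  have hor : o ≤ q₂ - r₂ := max_le (by linarith [h.r₂_le]) (by linarith)
  have hoS : q₂ - Smax ≤ o := le_max_right ..
  have hαo : α * (o / α) = o := mul_div_cancel₀ _ hα.ne'
  have hoc₂ : o / α ≤ v.c₂ := (div_le_iff₀' hα).2 hoc
  obtain ⟨y, hy, hyx, hyo, hyw⟩ := exists_split_of_le_add (div_nonneg ho hα.le)
    (mul_nonneg hβ.le hv.x₁₂_nonneg) hv.w₂_nonneg ((div_le_iff₀' hα).2 how)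
  set g := min (y / β) ((r₁ - q₁) / α)
  have hg : 0 ≤ g := le_min (div_nonneg hy hβ.le) (div_nonneg (by linarith [h.p₁_le]) hα.le)
  have hgy : g ≤ y / β := min_le_left ..
  have hαg : α * g ≤ r₁ - q₁ := (le_div_iff₀' hα).1 (min_le_right ..)
  have hgain : β * (r₁ - q₁ - α * g) ≤ α * (q₂ - o - r₂) + (m + (o / α - y)) := by
    have hroom : 0 ≤ α * (q₂ - o - r₂) := mul_nonneg hα.le (by linarith)
    rcases min_cases (y / β) ((r₁ - q₁) / α) with ⟨hgy', -⟩ | ⟨hgr, -⟩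
    · have : α * (β * g) = α * y := by rw [show g = y / β from hgy', mul_div_cancel₀ _ hβ.ne']
      have : (1 - α) * y ≤ (1 - α) * (o / α) := mul_le_mul_of_nonneg_left hyo (by linarith)
      linarith [h.exchange, mul_le_of_le_one_left ho hα₁]
    · have : α * g = r₁ - q₁ := by rw [show g = (r₁ - q₁) / α from hgr, mul_div_cancel₀ _ hα.ne']
      rw [this, sub_self, mul_zero]
      linarith [h.budget_nonneg]
  rw [hq₁, hq₂] at hgain
  refine ⟨⟨v.w₁, v.w₂ - (o / α - y), v.c₁ + g, v.c₂ - o / α, v.d₁, v.d₂, v.x₁₂ - y / β, v.x₂₁⟩,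
    m + (o / α - y), ⟨hv.w₁_nonneg, ?_, ?_, ?_, hv.d₁_nonneg, hv.d₂_nonneg, ?_, hv.x₂₁_nonneg,
      hv.d₁_le, hv.d₂_le, ?_, ?_⟩, ?_, ⟨?_, ?_, ?_, ?_, ?_⟩, ?_⟩
  all_goals try simp only [balance₁, balance₂, next₁, next₂, cost]
  · linarith
  · linarith [hv.c₁_nonneg]
  · linarith
  · linarith [(div_le_iff₀' hβ).2 hyx]
  · linarith [mul_div_cancel₀ y hβ.ne', mul_le_mul_of_nonneg_left hgy hβ.le]
  · linarith [mul_div_cancel₀ y hβ.ne']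
  · linarith
  · linarith [h.p₁_nonneg, mul_nonneg hα.le hg]
  · linarith
  · linarith
  · linarith [h.budget_nonneg]
  · linarith [congrArg (α * ·) hαo]
  · linarith

theorem exists_compensating (hα : 0 < α) (hα₁ : α ≤ 1) (hβ : 0 < β) (he₁ : 0 ≤ e₁)
    (he₂ : e₂ ≤ 0) {r₁ r₂ p₁ p₂ m Smax : ℝ} {u : Decision} (hu : u.Admissible α β e₁ e₂ r₁ r₂)
    (hp₂ : p₂ ≤ Smax) (hr₂ : u.next₂ α r₂ ≤ Smax) (h : Compensates α β m p₁ p₂ r₁ r₂) :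
    ∃ (v : Decision) (m' : ℝ), v.Admissible α β e₁ e₂ p₁ p₂ ∧ v.next₂ α p₂ ≤ Smax ∧
      Compensates α β m' (v.next₁ α p₁) (v.next₂ α p₂) (u.next₁ α r₁) (u.next₂ α r₂) ∧
      v.cost + m' ≤ u.cost + m := by
  obtain ⟨v, m₁, hv, hvc, hvcost⟩ := hu.exists_discharge_repair hα hα₁ hβ.le he₁ h
  obtain ⟨v', m₂, hv', hcap, hv'c, hv'cost⟩ := hv.exists_overflow_repair hα hα₁ hβ he₂ hp₂ hr₂ hvc
  exact ⟨v', m₂, hv', hcap, hv'c, hv'cost.trans hvcost⟩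

end Decision.Admissible

def IsPolicy (α β Smax : ℝ) (E₁ E₂ : ℕ → ℝ) (k N : ℕ) (u : ℕ → Decision) (s₁ s₂ : ℕ → ℝ) :
    Prop :=
  (∀ t ∈ Icc k N, (u t).Admissible α β (E₁ t) (E₂ t) (s₁ t) (s₂ t) ∧
    s₁ (t + 1) = (u t).next₁ α (s₁ t) ∧ s₂ (t + 1) = (u t).next₂ α (s₂ t)) ∧
  ∀ t ∈ Icc k (N + 1), 0 ≤ s₁ t ∧ s₁ t ≤ Smax ∧ 0 ≤ s₂ t ∧ s₂ t ≤ Smax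

theorem feasible_iff_isPolicy {α β Smax : ℝ} {k N : ℕ} {E₁ E₂ : ℕ → ℝ} {σ₁ σ₂ : ℝ}
    {w₁ w₂ c₁ c₂ d₁ d₂ x₁₂ x₂₁ s₁ s₂ : ℕ → ℝ} :
    Feasible α β Smax k N E₁ E₂ σ₁ σ₂ w₁ w₂ c₁ c₂ d₁ d₂ x₁₂ x₂₁ s₁ s₂ ↔
      s₁ k = σ₁ ∧ s₂ k = σ₂ ∧ IsPolicy α β Smax E₁ E₂ k N
        (fun t ↦ ⟨w₁ t, w₂ t, c₁ t, c₂ t, d₁ t, d₂ t, x₁₂ t, x₂₁ t⟩) s₁ s₂ := by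
  refine and_congr_right fun _ ↦ and_congr_right fun _ ↦ and_congr_left fun _ ↦
    forall₂_congr fun t _ ↦ ⟨?_, ?_⟩
  · rintro ⟨h₁, h₂, h₃, h₄, h₅, h₆, h₇, h₈, hs₁, hs₂, h₉, h₁₀, h₁₁, h₁₂⟩
    exact ⟨⟨h₁, h₂, h₃, h₄, h₅, h₆, h₇, h₈, h₉, h₁₀, h₁₁, h₁₂⟩, hs₁, hs₂⟩
  · rintro ⟨⟨h₁, h₂, h₃, h₄, h₅, h₆, h₇, h₈, h₉, h₁₀, h₁₁, h₁₂⟩, hs₁, hs₂⟩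
    exact ⟨h₁, h₂, h₃, h₄, h₅, h₆, h₇, h₈, hs₁, hs₂, h₉, h₁₀, h₁₁, h₁₂⟩

namespace IsPolicy

variable {α β Smax : ℝ} {E₁ E₂ : ℕ → ℝ} {k N : ℕ} {u : ℕ → Decision} {s₁ s₂ : ℕ → ℝ}

theorem tail (hu : IsPolicy α β Smax E₁ E₂ k N u s₁ s₂) :
    IsPolicy α β Smax E₁ E₂ (k + 1) N u s₁ s₂ :=
  ⟨fun t ht ↦ hu.1 t (Icc_subset_Icc_left k.le_succ ht),
    fun t ht ↦ hu.2 t (Icc_subset_Icc_left k.le_succ ht)⟩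

theorem update (hu : IsPolicy α β Smax E₁ E₂ (k + 1) N u s₁ s₂) {v : Decision} {p₁ p₂ : ℝ}
    (hv : v.Admissible α β (E₁ k) (E₂ k) p₁ p₂) (h₁ : s₁ (k + 1) = v.next₁ α p₁)
    (h₂ : s₂ (k + 1) = v.next₂ α p₂) (hp : 0 ≤ p₁ ∧ p₁ ≤ Smax ∧ 0 ≤ p₂ ∧ p₂ ≤ Smax) :
    IsPolicy α β Smax E₁ E₂ k N (Function.update u k v) (Function.update s₁ k p₁)
      (Function.update s₂ k p₂) := by
  constructor
  · intro t ht
    rcases eq_or_ne t k with rfl | htk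
    · simp only [Function.update_self, Function.update_of_ne (Nat.succ_ne_self t)]
      exact ⟨hv, h₁, h₂⟩
    · have hkt : k + 1 ≤ t ∧ t ≤ N := by simp only [mem_Icc] at ht; omega
      simp only [Function.update_of_ne htk, Function.update_of_ne (by omega : t + 1 ≠ k)]
      exact hu.1 t (mem_Icc.2 hkt)
  · intro t ht
    rcases eq_or_ne t k with rfl | htk
    · simpa only [Function.update_self] using hp
    · simp only [Function.update_of_ne htk]
      exact hu.2 t (by simp only [mem_Icc] at ht ⊢; omega)

end IsPolicy

theorem sum_Icc_eq_add_sum_Icc_succ {M : Type*} [AddCommMonoid M] {f : ℕ → M} {k N : ℕ}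
    (hkN : k ≤ N) :
    ∑ t ∈ Icc k N, f t = f k + ∑ t ∈ Icc (k + 1) N, f t := by
  rw [Icc_add_one_left_eq_Ioc, add_sum_Ioc_eq_sum_Icc hkN]

theorem IsPolicy.exists_compensating {α β Smax : ℝ} {E₁ E₂ : ℕ → ℝ} {k N : ℕ}
    (hα : 0 < α) (hα₁ : α ≤ 1) (hβ : 0 < β) (hE₁ : ∀ t ∈ Icc k N, 0 ≤ E₁ t)
    (hE₂ : ∀ t ∈ Icc k N, E₂ t ≤ 0) {u : ℕ → Decision} {s₁ s₂ : ℕ → ℝ}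
    (hu : IsPolicy α β Smax E₁ E₂ k N u s₁ s₂) {p₁ p₂ m : ℝ} (hp₂ : p₂ ≤ Smax)
    (h : Compensates α β m p₁ p₂ (s₁ k) (s₂ k)) :
    ∃ (v : ℕ → Decision) (S₁ S₂ : ℕ → ℝ), S₁ k = p₁ ∧ S₂ k = p₂ ∧
      IsPolicy α β Smax E₁ E₂ k N v S₁ S₂ ∧
      ∑ t ∈ Icc k N, (v t).cost ≤ ∑ t ∈ Icc k N, (u t).cost + m := by
  rcases lt_or_ge N k with hNk | hkN
  · refine ⟨u, fun _ ↦ p₁, fun _ ↦ p₂, rfl, rfl, ⟨fun t ht ↦ ?_, fun t ht ↦ ?_⟩, ?_⟩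
    · exact absurd ht (by simp only [mem_Icc]; omega)
    · obtain rfl : t = k := by simp only [mem_Icc] at ht; omega
      obtain ⟨-, hs₁, hs₂, -⟩ := hu.2 t ht
      exact ⟨h.p₁_nonneg, h.p₁_le.trans hs₁, hs₂.trans h.r₂_le, hp₂⟩
    · simp [Icc_eq_empty_of_lt hNk, h.budget_nonneg]
  · have hk : k ∈ Icc k N := left_mem_Icc.2 hkN
    obtain ⟨hu_k, hs₁, hs₂⟩ := hu.1 k hk
    obtain ⟨-, hs₁k, hs₂k, -⟩ := hu.2 k (Icc_subset_Icc_right N.le_succ hk)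
    have hr₂ : (u k).next₂ α (s₂ k) ≤ Smax :=
      hs₂ ▸ (hu.2 (k + 1) (mem_Icc.2 ⟨by omega, by omega⟩)).2.2.2
    obtain ⟨w, m', hw, hcap, hc, hcost⟩ :=
      hu_k.exists_compensating hα hα₁ hβ (hE₁ k hk) (hE₂ k hk) hp₂ hr₂ h
    rw [← hs₁, ← hs₂] at hc
    have hsub : Icc (k + 1) N ⊆ Icc k N := Icc_subset_Icc_left k.le_succ
    obtain ⟨v, S₁, S₂, hS₁, hS₂, hv, hvcost⟩ := hu.tail.exists_compensating hα hα₁ hβ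
      (fun t ht ↦ hE₁ t (hsub ht)) (fun t ht ↦ hE₂ t (hsub ht)) hcap hc
    refine ⟨Function.update v k w, Function.update S₁ k p₁, Function.update S₂ k p₂,
      Function.update_self .., Function.update_self .., hv.update hw hS₁ hS₂
        ⟨h.p₁_nonneg, h.p₁_le.trans hs₁k, hs₂k.trans h.r₂_le, hp₂⟩, ?_⟩
    rw [sum_Icc_eq_add_sum_Icc_succ hkN, sum_Icc_eq_add_sum_Icc_succ hkN, Function.update_self,
      sum_congr rfl fun t ht ↦ by rw [Function.update_of_ne (by simp only [mem_Icc] at ht; omega)]]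
    linarith
termination_by N + 1 - k

theorem exists_isPolicy_idle (α β Smax : ℝ) (E₁ E₂ : ℕ → ℝ) (k N : ℕ) {σ₁ σ₂ : ℝ}
    (hσ₁ : 0 ≤ σ₁ ∧ σ₁ ≤ Smax) (hσ₂ : 0 ≤ σ₂ ∧ σ₂ ≤ Smax) :
    ∃ (u : ℕ → Decision) (s₁ s₂ : ℕ → ℝ), s₁ k = σ₁ ∧ s₂ k = σ₂ ∧
      IsPolicy α β Smax E₁ E₂ k N u s₁ s₂ :=
  ⟨fun t ↦ .idle (E₁ t) (E₂ t), fun _ ↦ σ₁, fun _ ↦ σ₂, rfl, rfl,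
    fun _ _ ↦ ⟨Decision.idle_admissible α β hσ₁.1 hσ₂.1,
      by simp [Decision.next₁, Decision.idle], by simp [Decision.next₂, Decision.idle]⟩,
    fun _ _ ↦ ⟨hσ₁.1, hσ₁.2, hσ₂.1, hσ₂.2⟩⟩

theorem Jstar_le_Jstar_of_forall_exists {α β Smax : ℝ} {k N : ℕ} {E₁ E₂ : ℕ → ℝ}
    {p₁ p₂ r₁ r₂ : ℝ}
    (hne : ∃ (u : ℕ → Decision) (s₁ s₂ : ℕ → ℝ), s₁ k = r₁ ∧ s₂ k = r₂ ∧
      IsPolicy α β Smax E₁ E₂ k N u s₁ s₂)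
    (h : ∀ (u : ℕ → Decision) (s₁ s₂ : ℕ → ℝ), s₁ k = r₁ → s₂ k = r₂ →
      IsPolicy α β Smax E₁ E₂ k N u s₁ s₂ →
      ∃ (v : ℕ → Decision) (S₁ S₂ : ℕ → ℝ), S₁ k = p₁ ∧ S₂ k = p₂ ∧
        IsPolicy α β Smax E₁ E₂ k N v S₁ S₂ ∧
        ∑ t ∈ Icc k N, (v t).cost ≤ ∑ t ∈ Icc k N, (u t).cost) :
    Jstar α β Smax k N E₁ E₂ p₁ p₂ ≤ Jstar α β Smax k N E₁ E₂ r₁ r₂ := by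
  obtain ⟨u, s₁, s₂, h₁, h₂, hu⟩ := hne
  unfold Jstar
  refine le_csInf ⟨_, Set.mem_ofPred.2
    ⟨_, _, _, _, _, _, _, _, s₁, s₂, feasible_iff_isPolicy.2 ⟨h₁, h₂, hu⟩, rfl⟩⟩ ?_
  rintro _ ⟨w₁, w₂, c₁, c₂, d₁, d₂, x₁₂, x₂₁, s₁, s₂, hF, rfl⟩
  obtain ⟨h₁, h₂, hu⟩ := feasible_iff_isPolicy.1 hF
  obtain ⟨v, S₁, S₂, hS₁, hS₂, hv, hcost⟩ := h _ s₁ s₂ h₁ h₂ hu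
  refine (csInf_le ⟨0, ?_⟩ (Set.mem_ofPred.2 ⟨_, _, _, _, _, _, _, _, S₁, S₂,
    feasible_iff_isPolicy.2 ⟨hS₁, hS₂, hv⟩, rfl⟩)).trans hcost
  rintro _ ⟨w₁, w₂, c₁, c₂, d₁, d₂, x₁₂, x₂₁, s₁, s₂, hF, rfl⟩
  exact sum_nonneg fun t ht ↦ add_nonneg (hF.2.2.1 t ht).1 (hF.2.2.1 t ht).2.1

theorem claim2_prop6_general
    (α β Smax : ℝ) (hα : 0 < α ∧ α ≤ 1) (hβ : 0 < β ∧ β ≤ 1)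
    (k N : ℕ) (E₁ E₂ : ℕ → ℝ)
    (hE₁ : ∀ t ∈ Finset.Icc k N, 0 ≤ E₁ t)
    (hE₂ : ∀ t ∈ Finset.Icc k N, E₂ t ≤ 0)
    (σ₁ σ₂ : ℝ) (hσ₁ : 0 ≤ σ₁ ∧ σ₁ ≤ Smax) (hσ₂ : 0 ≤ σ₂ ∧ σ₂ ≤ Smax)
    (Δ : ℝ) (hΔ : 0 ≤ Δ)
    (hΔle : Δ ≤ min ((Smax - σ₁) / α) (α * σ₂ / β)) :
    Jstar α β Smax k N E₁ E₂ σ₁ σ₂ ≤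
      Jstar α β Smax k N E₁ E₂ (σ₁ + α * Δ) (σ₂ - β * Δ / α) := by
  obtain ⟨hα₀, hα₁⟩ := hα
  have hαΔ : α * Δ ≤ Smax - σ₁ := (le_div_iff₀' hα₀).1 (hΔle.trans (min_le_left ..))
  have hβΔ : β * Δ / α ≤ σ₂ :=
    (div_le_iff₀' hα₀).2 ((le_div_iff₀' hβ.1).1 (hΔle.trans (min_le_right ..)))
  have hβΔ₀ : 0 ≤ β * Δ / α := by positivity [hβ.1.le]
  refine Jstar_le_Jstar_of_forall_exists (exists_isPolicy_idle α β Smax E₁ E₂ k N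
    ⟨by linarith [hσ₁.1, mul_nonneg hα₀.le hΔ], by linarith⟩ ⟨by linarith, by linarith⟩)
    fun u s₁ s₂ h₁ h₂ hu ↦ ?_
  have hcomp : Compensates α β 0 σ₁ σ₂ (s₁ k) (s₂ k) := by
    refine ⟨hσ₁.1, by linarith [mul_nonneg hα₀.le hΔ], by linarith, le_rfl, ?_⟩
    rw [h₁, h₂, sub_sub_cancel, add_sub_cancel_left, mul_div_cancel₀ _ hα₀.ne', add_zero]
    exact mul_le_mul_of_nonneg_left (mul_le_of_le_one_left hΔ hα₁) hβ.1.le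
  simpa using hu.exists_compensating hα₀ hα₁ hβ.1 hE₁ hE₂ hσ₂.2 hcomp

/-- Claim 2 in the proof of Proposition 6. -/
theorem claim2_prop6
    (α β Smax : ℝ) (hα : 0 < α ∧ α ≤ 1) (hβ : 0 < β ∧ β ≤ 1) (hS : 0 < Smax)
    (k N : ℕ) (hkN : k ≤ N) (E₁ E₂ : ℕ → ℝ)
    (hE₁ : ∀ t ∈ Finset.Icc k N, 0 ≤ E₁ t)
    (hE₂ : ∀ t ∈ Finset.Icc k N, E₂ t ≤ 0)
    (σ₁ σ₂ : ℝ) (hσ₁ : 0 ≤ σ₁ ∧ σ₁ ≤ Smax) (hσ₂ : 0 ≤ σ₂ ∧ σ₂ ≤ Smax)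
    (Δ : ℝ) (hΔ : 0 ≤ Δ)
    (hΔle : Δ ≤ min ((Smax - σ₁) / α) (α * σ₂ / β)) :
    Jstar α β Smax k N E₁ E₂ σ₁ σ₂ ≤
      Jstar α β Smax k N E₁ E₂ (σ₁ + α * Δ) (σ₂ - β * Δ / α) :=
  claim2_prop6_general α β Smax hα hβ k N E₁ E₂ hE₁ hE₂ σ₁ σ₂ hσ₁ hσ₂ Δ hΔ hΔle
end

section
/- (Optimality of the greedy policy when BS 1 always has a surplus and β > α.) Suppose 0 < α < β ≤ 1 and E₁(t) ≥ 0 for all t ∈ {k,…,N}. Then for every state (σ₁,σ₂) ∈ [0,S_max]², there exists a one-step feasible action at (σ₁,σ₂) with net energies (E₁(k),E₂(k)) whose grid draw w₁+w₂ equals the one-step minimum V₁(σ₁,σ₂,E₁(k),E₂(k)) and whose next state (σ₁',σ₂') satisfies J*_k(σ₁,σ₂) = V₁(σ₁,σ₂,E₁(k),E₂(k)) + J*_{k+1}(σ₁',σ₂'), where J*_{k+1} denotes the optimal cost of the problem over slots {k+1,…,N} (taken to be 0 when k = N). -/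
/-- A one-step feasible action at state `(s₁, s₂)` with net energies `(E₁, E₂)`. -/
def OneStep (α β Smax s₁ s₂ E₁ E₂ w₁ w₂ c₁ c₂ d₁ d₂ x₁₂ x₂₁ : ℝ) : Prop :=
  0 ≤ w₁ ∧ 0 ≤ w₂ ∧ 0 ≤ c₁ ∧ 0 ≤ c₂ ∧ 0 ≤ d₁ ∧ 0 ≤ d₂ ∧ 0 ≤ x₁₂ ∧ 0 ≤ x₂₁ ∧
  d₁ ≤ s₁ ∧ d₂ ≤ s₂ ∧
  0 ≤ s₁ + α * c₁ - d₁ ∧ s₁ + α * c₁ - d₁ ≤ Smax ∧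
  0 ≤ s₂ + α * c₂ - d₂ ∧ s₂ + α * c₂ - d₂ ≤ Smax ∧
  0 ≤ E₁ + w₁ - c₁ + α * d₁ - x₁₂ + β * x₂₁ ∧
  0 ≤ E₂ + w₂ - c₂ + α * d₂ - x₂₁ + β * x₁₂

/-- One-step minimal grid draw `V₁(s₁, s₂, E₁, E₂)`. -/
noncomputable def V1 (α β Smax s₁ s₂ E₁ E₂ : ℝ) : ℝ :=
  sInf {r : ℝ | ∃ w₁ w₂ c₁ c₂ d₁ d₂ x₁₂ x₂₁ : ℝ,
    OneStep α β Smax s₁ s₂ E₁ E₂ w₁ w₂ c₁ c₂ d₁ d₂ x₁₂ x₂₁ ∧ w₁ + w₂ = r}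

/-!
Backward induction shows that the optimal cost-to-go `J = J*_{k+1}` is antitone in the battery
levels and that lowering them raises `J` by at most `α β` per unit at BS 1 and `α` per unit at
BS 2: BS 1 never lacks energy, so its stored energy is only worth what reaches BS 2 after a
discharge and a transfer. At these prices the energy stored by any action is worth at most the
net surplus `P = E₂ + α σ₂ + β (E₁ + α σ₁)` plus its grid draw. Hence if `P < 0`, emptying both
batteries into BS 2 and buying `-P` there is an optimal first step. If `P ≥ 0`, every action is
dominated by a grid-free one (storing less, with a saving in grid energy that pays for the
difference at these prices), and the continuous `J` attains its minimum over the compact set of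
grid-free actions.
-/

open Finset

namespace EnergyCooperation

structure Decision where
  w₁ : ℝ
  w₂ : ℝ
  c₁ : ℝ
  c₂ : ℝ
  d₁ : ℝ
  d₂ : ℝ
  x₁₂ : ℝ
  x₂₁ : ℝ

namespace Decision

variable (α β Smax σ₁ σ₂ e₁ e₂ : ℝ)

def IsFeasible (a : Decision) : Prop :=
  OneStep α β Smax σ₁ σ₂ e₁ e₂ a.w₁ a.w₂ a.c₁ a.c₂ a.d₁ a.d₂ a.x₁₂ a.x₂₁

def draw (a : Decision) : ℝ := a.w₁ + a.w₂

def next₁ (a : Decision) : ℝ := σ₁ + α * a.c₁ - a.d₁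

def next₂ (a : Decision) : ℝ := σ₂ + α * a.c₂ - a.d₂

def Dominates (b a : Decision) : Prop :=
  b.next₁ α σ₁ ≤ a.next₁ α σ₁ ∧ b.next₂ α σ₂ ≤ a.next₂ α σ₂ ∧
    b.draw + α * β * (a.next₁ α σ₁ - b.next₁ α σ₁) + α * (a.next₂ α σ₂ - b.next₂ α σ₂) ≤ a.draw

def drain (w₂ : ℝ) : Decision :=
  { w₁ := 0, w₂ := w₂, c₁ := 0, c₂ := 0, d₁ := σ₁, d₂ := σ₂, x₁₂ := e₁ + α * σ₁, x₂₁ := 0 }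

def gridFree (p : ℝ × ℝ × ℝ × ℝ × ℝ × ℝ) : Decision :=
  { w₁ := 0, w₂ := 0, c₁ := p.1, c₂ := p.2.1, d₁ := p.2.2.1, d₂ := p.2.2.2.1, x₁₂ := p.2.2.2.2.1,
    x₂₁ := p.2.2.2.2.2 }

end Decision

/-- The energy BS 2 is left with when both batteries are emptied and BS 1 sends it everything. -/
def netSurplus (α β σ₁ σ₂ e₁ e₂ : ℝ) : ℝ := e₂ + α * σ₂ + β * (e₁ + α * σ₁)

def StorageValueBound (α β Smax : ℝ) (J : ℝ → ℝ → ℝ) : Prop :=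
  ∀ x ∈ Set.Icc 0 (Smax, Smax), ∀ y ∈ Set.Icc 0 (Smax, Smax), x ≤ y →
    J x.1 x.2 ≤ J y.1 y.2 + α * β * (y.1 - x.1) + α * (y.2 - x.2)

def policyCosts (α β Smax : ℝ) (k N : ℕ) (E₁ E₂ : ℕ → ℝ) (σ₁ σ₂ : ℝ) : Set ℝ :=
  {r | ∃ w₁ w₂ c₁ c₂ d₁ d₂ x₁₂ x₂₁ s₁ s₂ : ℕ → ℝ,
    Feasible α β Smax k N E₁ E₂ σ₁ σ₂ w₁ w₂ c₁ c₂ d₁ d₂ x₁₂ x₂₁ s₁ s₂ ∧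
    (∑ t ∈ Icc k N, (w₁ t + w₂ t)) = r}

theorem exists_add_eq_min {D c x : ℝ} (hD : 0 ≤ D) (hc : 0 ≤ c) (hx : 0 ≤ x) :
    ∃ ν μ : ℝ, 0 ≤ ν ∧ ν ≤ c ∧ 0 ≤ μ ∧ μ ≤ x ∧ ν + μ = min D (c + x) :=
  ⟨min c D, min D (c + x) - min c D, by grind⟩

theorem exists_mul_add_eq {P R : ℝ} (hP : 0 ≤ P) (hR : 0 ≤ R) :
    ∃ l : ℝ, 0 ≤ l ∧ l ≤ 1 ∧ l * (P + R) = R := by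
  rcases (add_nonneg hP hR).eq_or_lt with h | h
  · exact ⟨0, le_rfl, zero_le_one, by linarith⟩
  · exact ⟨R / (P + R), by positivity, div_le_one_of_le₀ (by linarith) h.le,
      div_mul_cancel₀ R h.ne'⟩

theorem backward_induction {motive : ℕ → Prop} (N : ℕ) (base : ∀ m, N < m → motive m)
    (step : ∀ m ≤ N, motive (m + 1) → motive m) (m : ℕ) : motive m := by
  induction h : N + 1 - m generalizing m with
  | zero => exact base m (by omega)
  | succ n ih => exact step m (by omega) (ih (m + 1) (by omega))

namespace Decision

variable {α β Smax σ₁ σ₂ τ₁ τ₂ e₁ e₂ : ℝ} {a b c : Decision}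

theorem IsFeasible.next_mem (ha : a.IsFeasible α β Smax σ₁ σ₂ e₁ e₂) :
    (a.next₁ α σ₁, a.next₂ α σ₂) ∈ Set.Icc 0 (Smax, Smax) := by
  obtain ⟨-, -, -, -, -, -, -, -, -, -, hn₁, hn₁', hn₂, hn₂', -, -⟩ := ha
  exact ⟨⟨hn₁, hn₂⟩, hn₁', hn₂'⟩

theorem IsFeasible.storage_value_le (hα₀ : 0 ≤ α) (hα₁ : α ≤ 1) (hβ₀ : 0 ≤ β) (hβ₁ : β ≤ 1)
    (ha : a.IsFeasible α β Smax σ₁ σ₂ e₁ e₂) :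
    α * β * a.next₁ α σ₁ + α * a.next₂ α σ₂ ≤ netSurplus α β σ₁ σ₂ e₁ e₂ + a.draw := by
  obtain ⟨hw₁, -, hc₁, hc₂, -, -, -, hx₂₁, -, -, -, -, -, -, hA, hB⟩ := ha
  have hαα : 0 ≤ 1 - α * α := sub_nonneg.2 (mul_le_one₀ hα₁ hα₀ hα₁)
  simp only [next₁, next₂, draw, netSurplus]
  -- `β` times the balance at BS 1 plus the balance at BS 2, up to charging and transfer losses
  linarith [mul_nonneg hβ₀ hA, mul_nonneg (sub_nonneg.2 hβ₁) hw₁,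
    mul_nonneg (mul_nonneg (sub_nonneg.2 hβ₁) (by linarith : (0 : ℝ) ≤ 1 + β)) hx₂₁,
    mul_nonneg (mul_nonneg hβ₀ hαα) hc₁, mul_nonneg hαα hc₂]

theorem Dominates.trans (hcb : c.Dominates α β σ₁ σ₂ b) (hba : b.Dominates α β σ₁ σ₂ a) :
    c.Dominates α β σ₁ σ₂ a :=
  ⟨hcb.1.trans hba.1, hcb.2.1.trans hba.2.1, by linarith [hcb.2.2, hba.2.2]⟩

theorem Dominates.draw_le (hα : 0 ≤ α) (hβ : 0 ≤ β) (h : b.Dominates α β σ₁ σ₂ a) :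
    b.draw ≤ a.draw := by
  obtain ⟨h₁, h₂, h⟩ := h
  linarith [mul_nonneg (mul_nonneg hα hβ) (sub_nonneg.2 h₁), mul_nonneg hα (sub_nonneg.2 h₂)]

theorem Dominates.draw_add_le {J : ℝ → ℝ → ℝ} (hJ : StorageValueBound α β Smax J)
    (ha : a.IsFeasible α β Smax σ₁ σ₂ e₁ e₂) (hb : b.IsFeasible α β Smax σ₁ σ₂ e₁ e₂)
    (hba : b.Dominates α β σ₁ σ₂ a) :
    b.draw + J (b.next₁ α σ₁) (b.next₂ α σ₂) ≤ a.draw + J (a.next₁ α σ₁) (a.next₂ α σ₂) := by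
  have := hJ _ hb.next_mem _ ha.next_mem (Prod.mk_le_mk.2 ⟨hba.1, hba.2.1⟩)
  linarith [hba.2.2]

theorem drain_isFeasible {w₂ : ℝ} (hα : 0 ≤ α) (he₁ : 0 ≤ e₁) (hσ₁ : σ₁ ∈ Set.Icc 0 Smax)
    (hσ₂ : σ₂ ∈ Set.Icc 0 Smax) (hw₂ : 0 ≤ w₂) (hP : 0 ≤ netSurplus α β σ₁ σ₂ e₁ e₂ + w₂) :
    (drain α σ₁ σ₂ e₁ w₂).IsFeasible α β Smax σ₁ σ₂ e₁ e₂ := by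
  have hSmax : 0 ≤ Smax := hσ₁.1.trans hσ₁.2
  simp only [IsFeasible, OneStep, drain, netSurplus] at hP ⊢
  refine ⟨le_rfl, hw₂, le_rfl, le_rfl, hσ₁.1, hσ₂.1, add_nonneg he₁ (mul_nonneg hα hσ₁.1), le_rfl,
    le_rfl, le_rfl, ?_, ?_, ?_, ?_, ?_, ?_⟩ <;> linarith

theorem drain_next₁ (w₂ : ℝ) : (drain α σ₁ σ₂ e₁ w₂).next₁ α σ₁ = 0 := by simp [drain, next₁]

theorem drain_next₂ (w₂ : ℝ) : (drain α σ₁ σ₂ e₁ w₂).next₂ α σ₂ = 0 := by simp [drain, next₂]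

theorem drain_dominates (hα₀ : 0 ≤ α) (hα₁ : α ≤ 1) (hβ₀ : 0 ≤ β) (hβ₁ : β ≤ 1)
    (hb : b.IsFeasible α β Smax σ₁ σ₂ e₁ e₂) :
    (drain α σ₁ σ₂ e₁ (-netSurplus α β σ₁ σ₂ e₁ e₂)).Dominates α β σ₁ σ₂ b := by
  have hvalue := hb.storage_value_le hα₀ hα₁ hβ₀ hβ₁
  obtain ⟨⟨hn₁, hn₂⟩, -⟩ := hb.next_mem
  refine ⟨?_, ?_, ?_⟩
  · rw [drain_next₁]; exact hn₁
  · rw [drain_next₂]; exact hn₂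
  · rw [drain_next₁, drain_next₂]
    simp only [draw, drain] at hvalue ⊢
    linarith

/-- Since `e₁ ≥ 0`, BS 1 buys grid energy only to charge its battery or to send it to BS 2; it
can charge or send less instead, and BS 2 buys the energy it no longer receives. -/
theorem IsFeasible.exists_dominates_w₁_eq_zero (hα₀ : 0 ≤ α) (hα₁ : α ≤ 1) (hβ₀ : 0 ≤ β)
    (hβ₁ : β ≤ 1) (he₁ : 0 ≤ e₁) (ha : a.IsFeasible α β Smax σ₁ σ₂ e₁ e₂) :
    ∃ b : Decision, b.IsFeasible α β Smax σ₁ σ₂ e₁ e₂ ∧ b.w₁ = 0 ∧ b.Dominates α β σ₁ σ₂ a := by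
  obtain ⟨hw₁, hw₂, hc₁, hc₂, hd₁, hd₂, hx₁₂, hx₂₁, hds₁, hds₂, hn₁, hn₁', hn₂, hn₂', hA, hB⟩ := ha
  obtain ⟨ν, μ, hν₀, hνc, hμ₀, hμx, hνμ⟩ := exists_add_eq_min hw₁ hc₁ hx₁₂
  have hcover : a.w₁ ≤ ν + μ + (e₁ + a.w₁ - a.c₁ + α * a.d₁ - a.x₁₂ + β * a.x₂₁) := by
    rw [hνμ]
    rcases min_choice a.w₁ (a.c₁ + a.x₁₂) with h | h <;> rw [h] <;>
      linarith [mul_nonneg hα₀ hd₁, mul_nonneg hβ₀ hx₂₁]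
  have hαν : 0 ≤ α * ν := mul_nonneg hα₀ hν₀
  have hααβ : α * α * β ≤ 1 := mul_le_one₀ (mul_le_one₀ hα₁ hα₀ hα₁) hβ₀ hβ₁
  have hcost : α * β * (α * ν) + β * μ ≤ ν + μ := by
    nlinarith [mul_nonneg (sub_nonneg.2 hααβ) hν₀, mul_nonneg (sub_nonneg.2 hβ₁) hμ₀]
  refine ⟨{ a with w₁ := 0, w₂ := a.w₂ + β * μ, c₁ := a.c₁ - ν, x₁₂ := a.x₁₂ - μ },
    ⟨le_rfl, by positivity, by linarith, hc₂, hd₁, hd₂, by linarith, hx₂₁, hds₁, hds₂,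
      by linarith [mul_nonneg hα₀ (sub_nonneg.2 hνc)], by linarith, hn₂, hn₂', by linarith,
      by linarith⟩, rfl, ?_, ?_, ?_⟩
  all_goals simp only [next₁, next₂, draw]
  · linarith
  · exact le_rfl
  · linarith [min_le_left a.w₁ (a.c₁ + a.x₁₂)]

/-- Mixing `a` with the draining action in the proportion `l = w₂ / (P + w₂)`, `P` the net
surplus, supplies exactly the energy BS 2 would buy, and the stored energy given up is worth
`l (P + w₂) = w₂`. -/
theorem IsFeasible.exists_dominates_draw_eq_zero_of_w₁_eq_zero (hα₀ : 0 ≤ α) (hα₁ : α ≤ 1)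
    (hβ₀ : 0 ≤ β) (hβ₁ : β ≤ 1) (he₁ : 0 ≤ e₁) (hP : 0 ≤ netSurplus α β σ₁ σ₂ e₁ e₂)
    (ha : a.IsFeasible α β Smax σ₁ σ₂ e₁ e₂) (hw₁ : a.w₁ = 0) :
    ∃ b : Decision, b.IsFeasible α β Smax σ₁ σ₂ e₁ e₂ ∧ b.draw = 0 ∧ b.Dominates α β σ₁ σ₂ a := by
  have hvalue := ha.storage_value_le hα₀ hα₁ hβ₀ hβ₁
  obtain ⟨-, hw₂, hc₁, hc₂, hd₁, hd₂, hx₁₂, hx₂₁, hds₁, hds₂, hn₁, hn₁', hn₂, hn₂', hA, hB⟩ := ha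
  obtain ⟨l, hl₀, hl₁, hlPR⟩ := exists_mul_add_eq hP hw₂
  have hm₀ : 0 ≤ 1 - l := sub_nonneg.2 hl₁
  simp only [Dominates, draw, next₁, next₂, netSurplus, hw₁, zero_add] at hvalue hlPR hA ⊢
  refine ⟨{ w₁ := 0, w₂ := 0, c₁ := (1 - l) * a.c₁, c₂ := (1 - l) * a.c₂,
            d₁ := (1 - l) * a.d₁ + l * σ₁, d₂ := (1 - l) * a.d₂ + l * σ₂,
            x₁₂ := (1 - l) * a.x₁₂ + l * (e₁ + α * σ₁), x₂₁ := (1 - l) * a.x₂₁ },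
    ⟨le_rfl, le_rfl, ?_, ?_, ?_, ?_, ?_, ?_, ?_, ?_, ?_, ?_, ?_, ?_, ?_, ?_⟩, add_zero 0,
    ?_, ?_, ?_⟩
  all_goals try dsimp only
  · exact mul_nonneg hm₀ hc₁
  · exact mul_nonneg hm₀ hc₂
  · linarith [mul_nonneg hm₀ hd₁, mul_nonneg hl₀ (hd₁.trans hds₁)]
  · linarith [mul_nonneg hm₀ hd₂, mul_nonneg hl₀ (hd₂.trans hds₂)]
  · linarith [mul_nonneg hm₀ hx₁₂,
      mul_nonneg hl₀ (add_nonneg he₁ (mul_nonneg hα₀ (hd₁.trans hds₁)))]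
  · exact mul_nonneg hm₀ hx₂₁
  · linarith [mul_nonneg hm₀ (sub_nonneg.2 hds₁)]
  · linarith [mul_nonneg hm₀ (sub_nonneg.2 hds₂)]
  · linarith [mul_nonneg hm₀ hn₁]
  · linarith [mul_nonneg hl₀ hn₁]
  · linarith [mul_nonneg hm₀ hn₂]
  · linarith [mul_nonneg hl₀ hn₂]
  · linarith [mul_nonneg hm₀ hA]
  · linarith [mul_nonneg hm₀ hB]
  · linarith [mul_nonneg hl₀ hn₁]
  · linarith [mul_nonneg hl₀ hn₂]
  · linarith [mul_le_mul_of_nonneg_left hvalue hl₀]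

theorem IsFeasible.exists_dominates_draw_eq_zero (hα₀ : 0 ≤ α) (hα₁ : α ≤ 1) (hβ₀ : 0 ≤ β)
    (hβ₁ : β ≤ 1) (he₁ : 0 ≤ e₁) (hP : 0 ≤ netSurplus α β σ₁ σ₂ e₁ e₂)
    (ha : a.IsFeasible α β Smax σ₁ σ₂ e₁ e₂) :
    ∃ b : Decision, b.IsFeasible α β Smax σ₁ σ₂ e₁ e₂ ∧ b.draw = 0 ∧ b.Dominates α β σ₁ σ₂ a := by
  obtain ⟨b, hb, hb₁, hba⟩ := ha.exists_dominates_w₁_eq_zero hα₀ hα₁ hβ₀ hβ₁ he₁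
  obtain ⟨c, hc, hc₀, hcb⟩ :=
    hb.exists_dominates_draw_eq_zero_of_w₁_eq_zero hα₀ hα₁ hβ₀ hβ₁ he₁ hP hb₁
  exact ⟨c, hc, hc₀, hcb.trans hba⟩

theorem IsFeasible.exists_transfer_eq_zero (hβ₁ : β ≤ 1) (ha : a.IsFeasible α β Smax σ₁ σ₂ e₁ e₂) :
    ∃ b : Decision, b.IsFeasible α β Smax σ₁ σ₂ e₁ e₂ ∧ (b.x₁₂ = 0 ∨ b.x₂₁ = 0) ∧
      b.w₁ = a.w₁ ∧ b.w₂ = a.w₂ ∧ b.next₁ α σ₁ = a.next₁ α σ₁ ∧ b.next₂ α σ₂ = a.next₂ α σ₂ := by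
  obtain ⟨hw₁, hw₂, hc₁, hc₂, hd₁, hd₂, hx₁₂, hx₂₁, hds₁, hds₂, hn₁, hn₁', hn₂, hn₂', hA, hB⟩ := ha
  set t := min a.x₁₂ a.x₂₁
  have ht₁ : t ≤ a.x₁₂ := min_le_left _ _
  have ht₂ : t ≤ a.x₂₁ := min_le_right _ _
  have hloss : 0 ≤ (1 - β) * t := mul_nonneg (sub_nonneg.2 hβ₁) (le_min hx₁₂ hx₂₁)
  refine ⟨{ a with x₁₂ := a.x₁₂ - t, x₂₁ := a.x₂₁ - t }, ⟨hw₁, hw₂, hc₁, hc₂, hd₁, hd₂,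
    sub_nonneg.2 ht₁, sub_nonneg.2 ht₂, hds₁, hds₂, hn₁, hn₁', hn₂, hn₂', by linarith,
    by linarith⟩, ?_, rfl, rfl, rfl, rfl⟩
  rcases min_choice a.x₁₂ a.x₂₁ with h | h
  · exact .inl (sub_eq_zero.2 h.symm)
  · exact .inr (sub_eq_zero.2 h.symm)

theorem IsFeasible.transfers_le (hα : 0 ≤ α) (he₁ : 0 ≤ e₁)
    (ha : a.IsFeasible α β Smax σ₁ σ₂ e₁ e₂) (hw₁ : a.w₁ = 0) (hw₂ : a.w₂ = 0)
    (hx : a.x₁₂ = 0 ∨ a.x₂₁ = 0) : a.x₁₂ ≤ e₁ + α * σ₁ ∧ a.x₂₁ ≤ max 0 (e₂ + α * σ₂) := by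
  obtain ⟨-, -, hc₁, hc₂, hd₁, hd₂, -, hx₂₁, hds₁, hds₂, -, -, -, -, hA, hB⟩ := ha
  have h₁ := mul_le_mul_of_nonneg_left hds₁ hα
  have h₂ := mul_le_mul_of_nonneg_left hds₂ hα
  have h₀ := mul_nonneg hα hd₁
  rcases hx with hx | hx <;> rw [hx] at hA hB ⊢ <;> rw [hw₁] at hA <;> rw [hw₂] at hB
  · exact ⟨by linarith, le_max_of_le_right (by linarith)⟩
  · exact ⟨by linarith, le_max_left _ _⟩

/-- Extra initial storage can be discharged and wasted. -/
theorem IsFeasible.exists_of_state_le (hα : 0 ≤ α) (ha : a.IsFeasible α β Smax σ₁ σ₂ e₁ e₂)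
    (h₁ : σ₁ ≤ τ₁) (h₂ : σ₂ ≤ τ₂) :
    ∃ b : Decision, b.IsFeasible α β Smax τ₁ τ₂ e₁ e₂ ∧ b.draw = a.draw ∧
      a.next₁ α σ₁ ≤ b.next₁ α τ₁ ∧ a.next₂ α σ₂ ≤ b.next₂ α τ₂ := by
  obtain ⟨hw₁, hw₂, hc₁, hc₂, hd₁, hd₂, hx₁₂, hx₂₁, hds₁, hds₂, hn₁, hn₁', hn₂, hn₂', hA, hB⟩ := ha
  set p₁ := max 0 (τ₁ + α * a.c₁ - a.d₁ - Smax)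
  set p₂ := max 0 (τ₂ + α * a.c₂ - a.d₂ - Smax)
  have hp₁ : 0 ≤ p₁ ∧ τ₁ + α * a.c₁ - a.d₁ - Smax ≤ p₁ ∧ p₁ ≤ τ₁ - σ₁ :=
    ⟨le_max_left _ _, le_max_right _ _, max_le (by linarith) (by linarith)⟩
  have hp₂ : 0 ≤ p₂ ∧ τ₂ + α * a.c₂ - a.d₂ - Smax ≤ p₂ ∧ p₂ ≤ τ₂ - σ₂ :=
    ⟨le_max_left _ _, le_max_right _ _, max_le (by linarith) (by linarith)⟩
  refine ⟨{ a with d₁ := a.d₁ + p₁, d₂ := a.d₂ + p₂ }, ⟨hw₁, hw₂, hc₁, hc₂, by linarith,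
    by linarith, hx₁₂, hx₂₁, by linarith, by linarith, by linarith, by linarith, by linarith,
    by linarith, by linarith [mul_nonneg hα hp₁.1], by linarith [mul_nonneg hα hp₂.1]⟩,
    rfl, ?_, ?_⟩ <;>
  · simp only [next₁, next₂]; linarith

/-- With `e₁ ≥ 0`, BS 1 can make up for discharging less by charging or sending less; BS 2 buys
what it no longer receives. -/
theorem IsFeasible.exists_of_state_ge (hα₀ : 0 ≤ α) (hα₁ : α ≤ 1) (hβ₀ : 0 ≤ β) (he₁ : 0 ≤ e₁)
    (ha : a.IsFeasible α β Smax τ₁ τ₂ e₁ e₂) (hσ₁ : 0 ≤ σ₁) (hσ₂ : 0 ≤ σ₂) (h₁ : σ₁ ≤ τ₁)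
    (h₂ : σ₂ ≤ τ₂) :
    ∃ b : Decision, b.IsFeasible α β Smax σ₁ σ₂ e₁ e₂ ∧
      b.next₁ α σ₁ ≤ a.next₁ α τ₁ ∧ b.next₂ α σ₂ ≤ a.next₂ α τ₂ ∧
      b.draw + α * β * (a.next₁ α τ₁ - b.next₁ α σ₁) + α * (a.next₂ α τ₂ - b.next₂ α σ₂) ≤
        a.draw + α * β * (τ₁ - σ₁) + α * (τ₂ - σ₂) := by
  obtain ⟨hw₁, hw₂, hc₁, hc₂, hd₁, hd₂, hx₁₂, hx₂₁, hds₁, hds₂, hn₁, hn₁', hn₂, hn₂', hA, hB⟩ := ha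
  set r₁ := min a.d₁ (τ₁ - σ₁)
  set r₂ := min a.d₂ (τ₂ - σ₂)
  have hr₁ : 0 ≤ r₁ ∧ r₁ ≤ a.d₁ ∧ r₁ ≤ τ₁ - σ₁ ∧ a.d₁ - σ₁ ≤ r₁ :=
    ⟨le_min hd₁ (by linarith), min_le_left _ _, min_le_right _ _,
      le_min (by linarith) (by linarith)⟩
  have hr₂ : 0 ≤ r₂ ∧ r₂ ≤ a.d₂ ∧ r₂ ≤ τ₂ - σ₂ ∧ a.d₂ - σ₂ ≤ r₂ :=
    ⟨le_min hd₂ (by linarith), min_le_left _ _, min_le_right _ _,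
      le_min (by linarith) (by linarith)⟩
  obtain ⟨ν, μ, hν₀, hνc, hμ₀, hμx, hνμ⟩ := exists_add_eq_min (mul_nonneg hα₀ hr₁.1) hc₁ hx₁₂
  have hcover : α * r₁ ≤ ν + μ + (e₁ + a.w₁ - a.c₁ + α * a.d₁ - a.x₁₂ + β * a.x₂₁) := by
    rw [hνμ]
    rcases min_choice (α * r₁) (a.c₁ + a.x₁₂) with h | h <;> rw [h] <;>
      linarith [mul_le_mul_of_nonneg_left hr₁.2.1 hα₀, mul_nonneg hβ₀ hx₂₁]
  have hcost : β * μ + α * β * (α * ν) ≤ α * β * r₁ := by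
    have := min_le_left (α * r₁) (a.c₁ + a.x₁₂)
    nlinarith [mul_nonneg (mul_nonneg hβ₀ (sub_nonneg.2 (mul_le_one₀ hα₁ hα₀ hα₁))) hν₀]
  refine ⟨{ a with w₂ := a.w₂ + α * r₂ + β * μ, c₁ := a.c₁ - ν, d₁ := a.d₁ - r₁,
                   d₂ := a.d₂ - r₂, x₁₂ := a.x₁₂ - μ },
    ⟨hw₁, by linarith [mul_nonneg hα₀ hr₂.1, mul_nonneg hβ₀ hμ₀], by linarith, hc₂, by linarith,
      by linarith, by linarith, hx₂₁, by linarith, by linarith,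
      by linarith [mul_nonneg hα₀ (sub_nonneg.2 hνc)], by linarith [mul_nonneg hα₀ hν₀],
      by linarith [mul_nonneg hα₀ hc₂], by linarith, by linarith, by linarith⟩, ?_, ?_, ?_⟩ <;>
  · simp only [next₁, next₂, draw]; linarith [mul_nonneg hα₀ hν₀]

end Decision

section Bellman

variable {α β Smax σ₁ σ₂ : ℝ} {k N : ℕ} {E₁ E₂ : ℕ → ℝ}

theorem nonneg_of_mem_policyCosts {r : ℝ} (hr : r ∈ policyCosts α β Smax k N E₁ E₂ σ₁ σ₂) :
    0 ≤ r := by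
  obtain ⟨w₁, w₂, _, _, _, _, _, _, _, _, ⟨_, _, hstep, _⟩, rfl⟩ := hr
  exact sum_nonneg fun t ht => add_nonneg (hstep t ht).1 (hstep t ht).2.1

theorem policyCosts_bddBelow : BddBelow (policyCosts α β Smax k N E₁ E₂ σ₁ σ₂) :=
  ⟨0, fun _ => nonneg_of_mem_policyCosts⟩

/-- Buying every deficit from the grid and leaving the batteries alone is feasible. -/
theorem policyCosts_nonempty (hσ₁ : σ₁ ∈ Set.Icc 0 Smax) (hσ₂ : σ₂ ∈ Set.Icc 0 Smax) :
    (policyCosts α β Smax k N E₁ E₂ σ₁ σ₂).Nonempty := by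
  refine ⟨_, fun t => max 0 (-E₁ t), fun t => max 0 (-E₂ t), 0, 0, 0, 0, 0, 0,
    fun _ => σ₁, fun _ => σ₂, ⟨rfl, rfl, fun t _ => ?_, fun _ _ => ⟨hσ₁.1, hσ₁.2, hσ₂.1, hσ₂.2⟩⟩,
    rfl⟩
  exact ⟨le_max_left _ _, le_max_left _ _, le_rfl, le_rfl, le_rfl, le_rfl, le_rfl, le_rfl,
    by simp, by simp, hσ₁.1, hσ₂.1,
    by simpa using neg_le_iff_add_nonneg'.1 (le_max_right 0 (-E₁ t)),
    by simpa using neg_le_iff_add_nonneg'.1 (le_max_right 0 (-E₂ t))⟩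

theorem Jstar_nonneg : 0 ≤ Jstar α β Smax k N E₁ E₂ σ₁ σ₂ :=
  Real.sInf_nonneg fun _ hr => nonneg_of_mem_policyCosts hr

theorem Jstar_eq_zero_of_lt (hNk : N < k) (hσ₁ : σ₁ ∈ Set.Icc 0 Smax)
    (hσ₂ : σ₂ ∈ Set.Icc 0 Smax) : Jstar α β Smax k N E₁ E₂ σ₁ σ₂ = 0 := by
  obtain ⟨r, hr⟩ : (policyCosts α β Smax k N E₁ E₂ σ₁ σ₂).Nonempty :=
    policyCosts_nonempty hσ₁ hσ₂
  refine le_antisymm ?_ Jstar_nonneg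
  obtain ⟨_, _, _, _, _, _, _, _, _, _, _, hsum⟩ := id hr
  rw [Icc_eq_empty_of_lt hNk, sum_empty] at hsum
  exact hsum ▸ csInf_le policyCosts_bddBelow hr

theorem sum_Icc_eq_add_sum_Icc_succ (f : ℕ → ℝ) (hkN : k ≤ N) :
    ∑ t ∈ Icc k N, f t = f k + ∑ t ∈ Icc (k + 1) N, f t := by
  rw [Icc_add_one_left_eq_Ioc, add_sum_Ioc_eq_sum_Icc hkN]

theorem Jstar_le_draw_add (hkN : k ≤ N) (hσ₁ : σ₁ ∈ Set.Icc 0 Smax)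
    (hσ₂ : σ₂ ∈ Set.Icc 0 Smax) {a : Decision} (ha : a.IsFeasible α β Smax σ₁ σ₂ (E₁ k) (E₂ k)) :
    Jstar α β Smax k N E₁ E₂ σ₁ σ₂ ≤
      a.draw + Jstar α β Smax (k + 1) N E₁ E₂ (a.next₁ α σ₁) (a.next₂ α σ₂) := by
  obtain ⟨hw₁, hw₂, hc₁, hc₂, hd₁, hd₂, hx₁₂, hx₂₁, hds₁, hds₂, hn₁, hn₁', hn₂, hn₂', hb₁, hb₂⟩ :=
    ha
  rw [← sub_le_iff_le_add']
  refine le_csInf (policyCosts_nonempty ⟨hn₁, hn₁'⟩ ⟨hn₂, hn₂'⟩) ?_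
  rintro _ ⟨W₁, W₂, C₁, C₂, D₁, D₂, X₁₂, X₂₁, S₁, S₂, ⟨hS₁, hS₂, hstep, hbox⟩, rfl⟩
  rw [sub_le_iff_le_add']
  refine csInf_le policyCosts_bddBelow ⟨Function.update W₁ k a.w₁, Function.update W₂ k a.w₂,
    Function.update C₁ k a.c₁, Function.update C₂ k a.c₂, Function.update D₁ k a.d₁,
    Function.update D₂ k a.d₂, Function.update X₁₂ k a.x₁₂, Function.update X₂₁ k a.x₂₁,
    Function.update S₁ k σ₁, Function.update S₂ k σ₂, ⟨by simp, by simp, fun t ht => ?_,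
    fun t ht => ?_⟩, ?_⟩
  · rcases eq_or_ne t k with rfl | htk
    · simp only [Function.update_self, Function.update_of_ne (Nat.succ_ne_self t), hS₁, hS₂]
      exact ⟨hw₁, hw₂, hc₁, hc₂, hd₁, hd₂, hx₁₂, hx₂₁, rfl, rfl, hds₁, hds₂, hb₁, hb₂⟩
    · have ht' : t ∈ Icc (k + 1) N := by simp only [mem_Icc] at ht ⊢; omega
      have hsk : t + 1 ≠ k := by have := (mem_Icc.1 ht').1; omega
      simpa only [Function.update_of_ne htk, Function.update_of_ne hsk] using hstep t ht'
  · rcases eq_or_ne t k with rfl | htk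
    · simpa only [Function.update_self] using ⟨hσ₁.1, hσ₁.2, hσ₂.1, hσ₂.2⟩
    · have ht' : t ∈ Icc (k + 1) (N + 1) := by simp only [mem_Icc] at ht ⊢; omega
      simpa only [Function.update_of_ne htk] using hbox t ht'
  · rw [sum_Icc_eq_add_sum_Icc_succ _ hkN]
    simp only [Function.update_self]
    congr 1
    refine sum_congr rfl fun t ht => ?_
    have htk : t ≠ k := by simp only [mem_Icc] at ht; omega
    simp only [Function.update_of_ne htk]

theorem le_Jstar_of_forall_le (hkN : k ≤ N) (hσ₁ : σ₁ ∈ Set.Icc 0 Smax)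
    (hσ₂ : σ₂ ∈ Set.Icc 0 Smax) {C : ℝ}
    (hC : ∀ a : Decision, a.IsFeasible α β Smax σ₁ σ₂ (E₁ k) (E₂ k) →
      C ≤ a.draw + Jstar α β Smax (k + 1) N E₁ E₂ (a.next₁ α σ₁) (a.next₂ α σ₂)) :
    C ≤ Jstar α β Smax k N E₁ E₂ σ₁ σ₂ := by
  refine le_csInf (policyCosts_nonempty hσ₁ hσ₂) ?_
  rintro _ ⟨w₁, w₂, c₁, c₂, d₁, d₂, x₁₂, x₂₁, s₁, s₂, ⟨rfl, rfl, hstep, hbox⟩, rfl⟩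
  obtain ⟨hw₁, hw₂, hc₁, hc₂, hd₁, hd₂, hx₁₂, hx₂₁, hs₁, hs₂, hds₁, hds₂, hb₁, hb₂⟩ :=
    hstep k (by simp [hkN])
  obtain ⟨hn₁, hn₁', hn₂, hn₂'⟩ := hbox (k + 1) (by simp [hkN])
  have htail : Jstar α β Smax (k + 1) N E₁ E₂ (s₁ (k + 1)) (s₂ (k + 1)) ≤
      ∑ t ∈ Icc (k + 1) N, (w₁ t + w₂ t) := by
    refine csInf_le policyCosts_bddBelow ⟨w₁, w₂, c₁, c₂, d₁, d₂, x₁₂, x₂₁, s₁, s₂,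
      ⟨rfl, rfl, fun t ht => hstep t ?_, fun t ht => hbox t ?_⟩, rfl⟩ <;>
    · simp only [mem_Icc] at ht ⊢; omega
  have hfirst := hC ⟨w₁ k, w₂ k, c₁ k, c₂ k, d₁ k, d₂ k, x₁₂ k, x₂₁ k⟩
    ⟨hw₁, hw₂, hc₁, hc₂, hd₁, hd₂, hx₁₂, hx₂₁, hds₁, hds₂, hs₁ ▸ hn₁, hs₁ ▸ hn₁', hs₂ ▸ hn₂,
      hs₂ ▸ hn₂', hb₁, hb₂⟩
  simp only [Decision.draw, Decision.next₁, Decision.next₂, ← hs₁, ← hs₂] at hfirst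
  rw [sum_Icc_eq_add_sum_Icc_succ _ hkN]
  linarith

theorem Jstar_eq_of_forall_le (hkN : k ≤ N) (hσ₁ : σ₁ ∈ Set.Icc 0 Smax)
    (hσ₂ : σ₂ ∈ Set.Icc 0 Smax) {a : Decision} (ha : a.IsFeasible α β Smax σ₁ σ₂ (E₁ k) (E₂ k))
    (hmin : ∀ b : Decision, b.IsFeasible α β Smax σ₁ σ₂ (E₁ k) (E₂ k) →
      a.draw + Jstar α β Smax (k + 1) N E₁ E₂ (a.next₁ α σ₁) (a.next₂ α σ₂) ≤
        b.draw + Jstar α β Smax (k + 1) N E₁ E₂ (b.next₁ α σ₁) (b.next₂ α σ₂)) :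
    Jstar α β Smax k N E₁ E₂ σ₁ σ₂ =
      a.draw + Jstar α β Smax (k + 1) N E₁ E₂ (a.next₁ α σ₁) (a.next₂ α σ₂) :=
  le_antisymm (Jstar_le_draw_add hkN hσ₁ hσ₂ ha) (le_Jstar_of_forall_le hkN hσ₁ hσ₂ hmin)

theorem Jstar_antitoneOn (hα : 0 ≤ α) (m : ℕ) :
    AntitoneOn (Function.uncurry (Jstar α β Smax m N E₁ E₂)) (Set.Icc 0 (Smax, Smax)) := by
  induction m using backward_induction N with
  | base m hNm => ?_
  | step m hmN ih => ?_
  all_goals rintro ⟨x₁, x₂⟩ ⟨hx₀, hx⟩ ⟨y₁, y₂⟩ ⟨hy₀, hy⟩ hxy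
  all_goals simp only [Function.uncurry_apply_pair]
  · rw [Jstar_eq_zero_of_lt hNm ⟨hx₀.1, hx.1⟩ ⟨hx₀.2, hx.2⟩,
      Jstar_eq_zero_of_lt hNm ⟨hy₀.1, hy.1⟩ ⟨hy₀.2, hy.2⟩]
  · refine le_Jstar_of_forall_le hmN ⟨hx₀.1, hx.1⟩ ⟨hx₀.2, hx.2⟩ fun a ha => ?_
    obtain ⟨b, hb, hdraw, h₁, h₂⟩ := ha.exists_of_state_le hα hxy.1 hxy.2
    calc Jstar α β Smax m N E₁ E₂ y₁ y₂
        ≤ b.draw + Jstar α β Smax (m + 1) N E₁ E₂ (b.next₁ α y₁) (b.next₂ α y₂) :=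
          Jstar_le_draw_add hmN ⟨hy₀.1, hy.1⟩ ⟨hy₀.2, hy.2⟩ hb
      _ ≤ a.draw + Jstar α β Smax (m + 1) N E₁ E₂ (a.next₁ α x₁) (a.next₂ α x₂) := by
          rw [hdraw]
          gcongr
          exact ih ha.next_mem hb.next_mem (Prod.mk_le_mk.2 ⟨h₁, h₂⟩)

theorem Jstar_storageValueBound (hα₀ : 0 ≤ α) (hα₁ : α ≤ 1) (hβ₀ : 0 ≤ β) (m : ℕ)
    (hE₁ : ∀ t ∈ Icc m N, 0 ≤ E₁ t) :
    StorageValueBound α β Smax (Jstar α β Smax m N E₁ E₂) := by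
  induction m using backward_induction N with
  | base m hNm => ?_
  | step m hmN ih => ?_
  all_goals rintro ⟨x₁, x₂⟩ ⟨hx₀, hx⟩ ⟨y₁, y₂⟩ ⟨hy₀, hy⟩ hxy
  all_goals obtain ⟨h₁, h₂⟩ := Prod.mk_le_mk.1 hxy
  · rw [Jstar_eq_zero_of_lt hNm ⟨hx₀.1, hx.1⟩ ⟨hx₀.2, hx.2⟩,
      Jstar_eq_zero_of_lt hNm ⟨hy₀.1, hy.1⟩ ⟨hy₀.2, hy.2⟩]
    have := mul_nonneg (mul_nonneg hα₀ hβ₀) (sub_nonneg.2 h₁)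
    have := mul_nonneg hα₀ (sub_nonneg.2 h₂)
    dsimp only
    linarith
  · have hEm : 0 ≤ E₁ m := hE₁ m (mem_Icc.2 ⟨le_rfl, hmN⟩)
    have hJ := ih fun t ht => hE₁ t (Icc_subset_Icc_left m.le_succ ht)
    dsimp only
    rw [add_assoc, ← sub_le_iff_le_add]
    refine le_Jstar_of_forall_le hmN ⟨hy₀.1, hy.1⟩ ⟨hy₀.2, hy.2⟩ fun a ha => ?_
    obtain ⟨b, hb, hb₁, hb₂, hcost⟩ := ha.exists_of_state_ge hα₀ hα₁ hβ₀ hEm hx₀.1 hx₀.2 h₁ h₂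
    have hle := Jstar_le_draw_add hmN ⟨hx₀.1, hx.1⟩ ⟨hx₀.2, hx.2⟩ hb
    have hnext := hJ _ hb.next_mem _ ha.next_mem (Prod.mk_le_mk.2 ⟨hb₁, hb₂⟩)
    dsimp only at hnext
    linarith

end Bellman

variable {α β Smax σ₁ σ₂ e₁ e₂ : ℝ} {J : ℝ → ℝ → ℝ}

theorem StorageValueBound.lipschitzOnWith (hα : 0 ≤ α) (hβ : 0 ≤ β)
    (hJ : StorageValueBound α β Smax J)
    (hanti : AntitoneOn (Function.uncurry J) (Set.Icc 0 (Smax, Smax))) :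
    LipschitzOnWith (α * β + α).toNNReal (Function.uncurry J) (Set.Icc 0 (Smax, Smax)) := by
  have hle : ∀ x ∈ Set.Icc 0 (Smax, Smax), ∀ y ∈ Set.Icc 0 (Smax, Smax),
      Function.uncurry J x ≤ Function.uncurry J y + (α * β + α) * dist x y := by
    intro x hx y hy
    have hm : x ⊓ y ∈ Set.Icc 0 (Smax, Smax) := ⟨le_inf hx.1 hy.1, inf_le_left.trans hx.2⟩
    have hxm := hanti hm hx inf_le_left
    have hmy := hJ _ hm _ hy inf_le_right
    have d₁ : y.1 - (x ⊓ y).1 ≤ dist x y := by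
      rw [Prod.fst_inf, Prod.dist_eq, Real.dist_eq]
      exact le_max_of_le_left (by grind)
    have d₂ : y.2 - (x ⊓ y).2 ≤ dist x y := by
      rw [Prod.snd_inf, Prod.dist_eq, Real.dist_eq, Real.dist_eq]
      exact le_max_of_le_right (by grind)
    simp only [Function.uncurry] at hxm hmy ⊢
    linarith [mul_le_mul_of_nonneg_left d₁ (mul_nonneg hα hβ), mul_le_mul_of_nonneg_left d₂ hα]
  rw [lipschitzOnWith_iff_dist_le_mul, Real.coe_toNNReal _ (by positivity)]
  intro x hx y hy
  have hyx := hle y hy x hx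
  rw [dist_comm] at hyx
  rw [Real.dist_eq, abs_sub_le_iff]
  constructor <;> linarith [hle x hx y hy]

open Decision in
/-- Grid-free actions sending energy one way only form a compact set of actions that reach
every next state reachable without the grid. -/
theorem exists_draw_eq_zero_forall_le (hα : 0 ≤ α) (hβ₀ : 0 ≤ β) (hβ₁ : β ≤ 1) (he₁ : 0 ≤ e₁)
    (hP : 0 ≤ netSurplus α β σ₁ σ₂ e₁ e₂) (hσ₁ : σ₁ ∈ Set.Icc 0 Smax) (hσ₂ : σ₂ ∈ Set.Icc 0 Smax)
    (hJ : ContinuousOn (Function.uncurry J) (Set.Icc 0 (Smax, Smax))) :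
    ∃ a : Decision, a.IsFeasible α β Smax σ₁ σ₂ e₁ e₂ ∧ a.draw = 0 ∧
      ∀ b : Decision, b.IsFeasible α β Smax σ₁ σ₂ e₁ e₂ → b.draw = 0 →
        J (a.next₁ α σ₁) (a.next₂ α σ₂) ≤ J (b.next₁ α σ₁) (b.next₂ α σ₂) := by
  set M₁ := e₁ + α * σ₁
  set M₂ := max 0 (e₂ + α * σ₂)
  set K := {p | (gridFree p).IsFeasible α β Smax σ₁ σ₂ e₁ e₂ ∧ p.2.2.2.2.1 ≤ M₁ ∧
    p.2.2.2.2.2 ≤ M₂}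
  have hKne : K.Nonempty := ⟨(0, 0, σ₁, σ₂, M₁, 0),
    drain_isFeasible (w₂ := 0) hα he₁ hσ₁ hσ₂ le_rfl (by simpa using hP), le_rfl, le_max_left _ _⟩
  have hKc : IsClosed K := by
    simp only [K, IsFeasible, OneStep, gridFree, Set.ofPred_and]
    repeat' apply IsClosed.inter
    all_goals exact isClosed_le (by fun_prop) (by fun_prop)
  have hKsub : K ⊆ Set.Icc 0 (M₁ + β * M₂, M₂ + β * M₁, σ₁, σ₂, M₁, M₂) := by
    rintro ⟨c₁, c₂, d₁, d₂, x₁₂, x₂₁⟩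
      ⟨⟨-, -, hc₁, hc₂, hd₁, hd₂, hx₁₂, hx₂₁, hds₁, hds₂, -, -, -, -, hA, hB⟩, hM₁, hM₂⟩
    simp only [gridFree] at *
    have := mul_le_mul_of_nonneg_left hM₁ hβ₀
    have := mul_le_mul_of_nonneg_left hM₂ hβ₀
    have := mul_le_mul_of_nonneg_left hds₁ hα
    have := mul_le_mul_of_nonneg_left hds₂ hα
    have := le_max_right 0 (e₂ + α * σ₂)
    exact ⟨⟨hc₁, hc₂, hd₁, hd₂, hx₁₂, hx₂₁⟩, by linarith, by linarith, hds₁, hds₂, hM₁, hM₂⟩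
  have hf : ContinuousOn (fun p => J ((gridFree p).next₁ α σ₁) ((gridFree p).next₂ α σ₂)) K :=
    hJ.comp (f := fun p => ((gridFree p).next₁ α σ₁, (gridFree p).next₂ α σ₂))
      (by simp only [gridFree, next₁, next₂]; fun_prop) fun p hp => hp.1.next_mem
  obtain ⟨p, hpK, hpmin⟩ :=
    (isCompact_Icc.of_isClosed_subset hKc hKsub).exists_isMinOn hKne hf
  refine ⟨gridFree p, hpK.1, add_zero 0, fun b hb hb₀ => ?_⟩
  obtain ⟨b', hb', hx, hw₁, hw₂, hn₁, hn₂⟩ := hb.exists_transfer_eq_zero hβ₁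
  have hb'₀ : b'.w₁ = 0 ∧ b'.w₂ = 0 := by
    simp only [draw] at hb₀
    constructor <;> linarith [hb.1, hb.2.1]
  have hb'eq : gridFree (b'.c₁, b'.c₂, b'.d₁, b'.d₂, b'.x₁₂, b'.x₂₁) = b' := by
    obtain ⟨w₁, w₂, c₁, c₂, d₁, d₂, x₁₂, x₂₁⟩ := b'
    obtain ⟨rfl, rfl⟩ := hb'₀
    rfl
  have hmem : (b'.c₁, b'.c₂, b'.d₁, b'.d₂, b'.x₁₂, b'.x₂₁) ∈ K :=
    ⟨hb'eq ▸ hb', hb'.transfers_le hα he₁ hb'₀.1 hb'₀.2 hx⟩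
  rw [← hn₁, ← hn₂, ← hb'eq]
  exact hpmin hmem

open Decision in
theorem exists_optimal_action (hα₀ : 0 ≤ α) (hα₁ : α ≤ 1) (hβ₀ : 0 ≤ β) (hβ₁ : β ≤ 1)
    (he₁ : 0 ≤ e₁) (hσ₁ : σ₁ ∈ Set.Icc 0 Smax) (hσ₂ : σ₂ ∈ Set.Icc 0 Smax)
    (hJ : StorageValueBound α β Smax J)
    (hanti : AntitoneOn (Function.uncurry J) (Set.Icc 0 (Smax, Smax))) :
    ∃ a : Decision, a.IsFeasible α β Smax σ₁ σ₂ e₁ e₂ ∧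
      (∀ b : Decision, b.IsFeasible α β Smax σ₁ σ₂ e₁ e₂ → a.draw ≤ b.draw) ∧
      ∀ b : Decision, b.IsFeasible α β Smax σ₁ σ₂ e₁ e₂ →
        a.draw + J (a.next₁ α σ₁) (a.next₂ α σ₂) ≤ b.draw + J (b.next₁ α σ₁) (b.next₂ α σ₂) := by
  rcases le_or_gt 0 (netSurplus α β σ₁ σ₂ e₁ e₂) with hP | hP
  · obtain ⟨a, ha, ha₀, hmin⟩ := exists_draw_eq_zero_forall_le hα₀ hβ₀ hβ₁ he₁ hP hσ₁ hσ₂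
      (hJ.lipschitzOnWith hα₀ hβ₀ hanti).continuousOn
    refine ⟨a, ha, fun b hb => ha₀ ▸ add_nonneg hb.1 hb.2.1, fun b hb => ?_⟩
    obtain ⟨c, hc, hc₀, hcb⟩ := hb.exists_dominates_draw_eq_zero hα₀ hα₁ hβ₀ hβ₁ he₁ hP
    calc a.draw + J (a.next₁ α σ₁) (a.next₂ α σ₂)
        ≤ c.draw + J (c.next₁ α σ₁) (c.next₂ α σ₂) := by
          rw [ha₀, hc₀, zero_add, zero_add]
          exact hmin c hc hc₀
      _ ≤ b.draw + J (b.next₁ α σ₁) (b.next₂ α σ₂) := hcb.draw_add_le hJ hb hc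
  · have hd := drain_isFeasible (β := β) (Smax := Smax) (e₂ := e₂) hα₀ he₁ hσ₁ hσ₂
      (neg_nonneg.2 hP.le) (by linarith)
    exact ⟨_, hd, fun b hb => (drain_dominates hα₀ hα₁ hβ₀ hβ₁ hb).draw_le hα₀ hβ₀,
      fun b hb => (drain_dominates hα₀ hα₁ hβ₀ hβ₁ hb).draw_add_le hJ hb hd⟩

theorem V1_eq_draw_of_forall_le {a : Decision} (ha : a.IsFeasible α β Smax σ₁ σ₂ e₁ e₂)
    (hmin : ∀ b : Decision, b.IsFeasible α β Smax σ₁ σ₂ e₁ e₂ → a.draw ≤ b.draw) :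
    V1 α β Smax σ₁ σ₂ e₁ e₂ = a.draw := by
  refine IsLeast.csInf_eq ⟨⟨a.w₁, a.w₂, a.c₁, a.c₂, a.d₁, a.d₂, a.x₁₂, a.x₂₁, ha, rfl⟩, ?_⟩
  rintro _ ⟨w₁, w₂, c₁, c₂, d₁, d₂, x₁₂, x₂₁, hb, rfl⟩
  exact hmin ⟨w₁, w₂, c₁, c₂, d₁, d₂, x₁₂, x₂₁⟩ hb

end EnergyCooperation

open EnergyCooperation in
theorem greedy_optimal_surplus_general
    (α β Smax : ℝ) (hα : 0 < α) (hαβ : α < β) (hβ : β ≤ 1)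
    (k N : ℕ) (hkN : k ≤ N) (E₁ E₂ : ℕ → ℝ)
    (hE₁ : ∀ t ∈ Finset.Icc k N, 0 ≤ E₁ t)
    (σ₁ σ₂ : ℝ) (hσ₁ : 0 ≤ σ₁ ∧ σ₁ ≤ Smax) (hσ₂ : 0 ≤ σ₂ ∧ σ₂ ≤ Smax) :
    ∃ w₁ w₂ c₁ c₂ d₁ d₂ x₁₂ x₂₁ : ℝ,
      OneStep α β Smax σ₁ σ₂ (E₁ k) (E₂ k) w₁ w₂ c₁ c₂ d₁ d₂ x₁₂ x₂₁ ∧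
      w₁ + w₂ = V1 α β Smax σ₁ σ₂ (E₁ k) (E₂ k) ∧
      Jstar α β Smax k N E₁ E₂ σ₁ σ₂ =
        V1 α β Smax σ₁ σ₂ (E₁ k) (E₂ k) +
          Jstar α β Smax (k + 1) N E₁ E₂ (σ₁ + α * c₁ - d₁) (σ₂ + α * c₂ - d₂) := by
  have hβ₀ : 0 ≤ β := hα.le.trans hαβ.le
  have hα₁ : α ≤ 1 := hαβ.le.trans hβ
  obtain ⟨a, ha, hdraw, hcost⟩ := exists_optimal_action (e₂ := E₂ k) hα.le hα₁ hβ₀ hβ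
    (hE₁ k (left_mem_Icc.2 hkN)) hσ₁ hσ₂
    (Jstar_storageValueBound hα.le hα₁ hβ₀ (k + 1)
      fun t ht => hE₁ t (Icc_subset_Icc_left k.le_succ ht))
    (Jstar_antitoneOn hα.le (k + 1))
  have hV1 := V1_eq_draw_of_forall_le ha hdraw
  refine ⟨a.w₁, a.w₂, a.c₁, a.c₂, a.d₁, a.d₂, a.x₁₂, a.x₂₁, ha, hV1.symm, ?_⟩
  rw [hV1]
  exact Jstar_eq_of_forall_le hkN hσ₁ hσ₂ ha hcost

/-- Proposition 5: optimality of the greedy policy when BS 1 always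
has a surplus and `β > α`. -/
theorem greedy_optimal_surplus
    (α β Smax : ℝ) (hα : 0 < α) (hαβ : α < β) (hβ : β ≤ 1) (hS : 0 < Smax)
    (k N : ℕ) (hkN : k ≤ N) (E₁ E₂ : ℕ → ℝ)
    (hE₁ : ∀ t ∈ Finset.Icc k N, 0 ≤ E₁ t)
    (σ₁ σ₂ : ℝ) (hσ₁ : 0 ≤ σ₁ ∧ σ₁ ≤ Smax) (hσ₂ : 0 ≤ σ₂ ∧ σ₂ ≤ Smax) :
    ∃ w₁ w₂ c₁ c₂ d₁ d₂ x₁₂ x₂₁ : ℝ,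
      OneStep α β Smax σ₁ σ₂ (E₁ k) (E₂ k) w₁ w₂ c₁ c₂ d₁ d₂ x₁₂ x₂₁ ∧
      w₁ + w₂ = V1 α β Smax σ₁ σ₂ (E₁ k) (E₂ k) ∧
      Jstar α β Smax k N E₁ E₂ σ₁ σ₂ =
        V1 α β Smax σ₁ σ₂ (E₁ k) (E₂ k) +
          Jstar α β Smax (k + 1) N E₁ E₂ (σ₁ + α * c₁ - d₁) (σ₂ + α * c₂ - d₂) :=
  greedy_optimal_surplus_general α β Smax hα hαβ hβ k N hkN E₁ E₂ hE₁ σ₁ σ₂ hσ₁ hσ₂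
end

section
/- (Closed form for the one-step minimal grid draw in Case 2.1 of the greedy algorithm.) Suppose 0 < α ≤ 1, 0 < β ≤ 1, (s₁,s₂) ∈ [0,S_max]², E₁ ≥ 0, E₂ < 0, and −E₂ ≥ β·E₁ + α·s₂. Then the infimum V₁(s₁,s₂,E₁,E₂) of grid draw over one-step feasible actions equals max{0, −E₂ − β·E₁ − α·s₂ − α·β·s₁}. -/
def gridDraws (α β Smax s₁ s₂ E₁ E₂ : ℝ) : Set ℝ :=
  {r : ℝ | ∃ w₁ w₂ c₁ c₂ d₁ d₂ x₁₂ x₂₁ : ℝ,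
    OneStep α β Smax s₁ s₂ E₁ E₂ w₁ w₂ c₁ c₂ d₁ d₂ x₁₂ x₂₁ ∧ w₁ + w₂ = r}

namespace OneStep

variable {α β Smax s₁ s₂ E₁ E₂ w₁ w₂ c₁ c₂ d₁ d₂ x₁₂ x₂₁ : ℝ}

theorem grid_draw_nonneg (h : OneStep α β Smax s₁ s₂ E₁ E₂ w₁ w₂ c₁ c₂ d₁ d₂ x₁₂ x₂₁) :
    0 ≤ w₁ + w₂ :=
  add_nonneg h.1 h.2.1

theorem le_grid_draw (hα : 0 ≤ α) (hβ₀ : 0 ≤ β) (hβ₁ : β ≤ 1)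
    (h : OneStep α β Smax s₁ s₂ E₁ E₂ w₁ w₂ c₁ c₂ d₁ d₂ x₁₂ x₂₁) :
    -E₂ - β * E₁ - α * s₂ - α * β * s₁ ≤ w₁ + w₂ := by
  obtain ⟨hw₁, -, hc₁, hc₂, -, -, -, hx₂₁, hd₁, hd₂, -, -, -, -, hbal₁, hbal₂⟩ := h
  have hβsq : 0 ≤ 1 - β ^ 2 := by nlinarith
  linarith [mul_nonneg hβ₀ hbal₁, mul_nonneg (sub_nonneg.2 hβ₁) hw₁, mul_nonneg hβ₀ hc₁,
    mul_nonneg (mul_nonneg hα hβ₀) (sub_nonneg.2 hd₁), mul_nonneg hα (sub_nonneg.2 hd₂),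
    mul_nonneg hβsq hx₂₁]

theorem of_drain_and_transfer (hSmax : 0 ≤ Smax) (hs₁ : 0 ≤ s₁) (hs₂ : 0 ≤ s₂)
    (hx : 0 ≤ E₁ + α * s₁) (hw₀ : 0 ≤ w₂) (hw : -E₂ - β * E₁ - α * s₂ - α * β * s₁ ≤ w₂) :
    OneStep α β Smax s₁ s₂ E₁ E₂ 0 w₂ 0 0 s₁ s₂ (E₁ + α * s₁) 0 := by
  refine ⟨le_rfl, hw₀, le_rfl, le_rfl, hs₁, hs₂, hx, le_rfl, le_rfl, le_rfl,
    ?_, ?_, ?_, ?_, ?_, ?_⟩ <;> linarith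

end OneStep

theorem isLeast_gridDraws {α β Smax s₁ s₂ E₁ E₂ : ℝ} (hα : 0 ≤ α) (hβ₀ : 0 ≤ β) (hβ₁ : β ≤ 1)
    (hs₁ : 0 ≤ s₁) (hs₁S : s₁ ≤ Smax) (hs₂ : 0 ≤ s₂) (hE₁ : 0 ≤ E₁) :
    IsLeast (gridDraws α β Smax s₁ s₂ E₁ E₂) (max 0 (-E₂ - β * E₁ - α * s₂ - α * β * s₁)) := by
  refine ⟨⟨0, _, 0, 0, s₁, s₂, E₁ + α * s₁, 0, ?_, zero_add _⟩, ?_⟩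
  · exact OneStep.of_drain_and_transfer (hs₁.trans hs₁S) hs₁ hs₂ (by positivity)
      (le_max_left _ _) (le_max_right _ _)
  · rintro r ⟨w₁, w₂, c₁, c₂, d₁, d₂, x₁₂, x₂₁, h, rfl⟩
    exact max_le h.grid_draw_nonneg (h.le_grid_draw hα hβ₀ hβ₁)

theorem one_step_min_grid_draw_case21_general
    (α β Smax : ℝ) (hα : 0 < α ∧ α ≤ 1) (hβ : 0 < β ∧ β ≤ 1)
    (s₁ s₂ : ℝ) (hs₁ : 0 ≤ s₁ ∧ s₁ ≤ Smax) (hs₂ : 0 ≤ s₂ ∧ s₂ ≤ Smax)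
    (E₁ E₂ : ℝ) (hE₁ : 0 ≤ E₁) :
    V1 α β Smax s₁ s₂ E₁ E₂ = max 0 (-E₂ - β * E₁ - α * s₂ - α * β * s₁) :=
  (isLeast_gridDraws hα.1.le hβ.1.le hβ.2 hs₁.1 hs₁.2 hs₂.1 hE₁).csInf_eq

/-- Case 2.1 of the greedy algorithm: closed form for the one-step
minimal grid draw when the deficit at BS 2 exceeds `β·E₁ + α·s₂`. -/
theorem one_step_min_grid_draw_case21
    (α β Smax : ℝ) (hα : 0 < α ∧ α ≤ 1) (hβ : 0 < β ∧ β ≤ 1) (hS : 0 < Smax)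
    (s₁ s₂ : ℝ) (hs₁ : 0 ≤ s₁ ∧ s₁ ≤ Smax) (hs₂ : 0 ≤ s₂ ∧ s₂ ≤ Smax)
    (E₁ E₂ : ℝ) (hE₁ : 0 ≤ E₁) (hE₂ : E₂ < 0)
    (hdef : -E₂ ≥ β * E₁ + α * s₂) :
    V1 α β Smax s₁ s₂ E₁ E₂ = max 0 (-E₂ - β * E₁ - α * s₂ - α * β * s₁) :=
  one_step_min_grid_draw_case21_general α β Smax hα hβ s₁ s₂ hs₁ hs₂ E₁ E₂ hE₁
end

section
/- (Closed form for the optimal cost when there is no storage, α = 0.) Suppose α = 0 and 0 ≤ β ≤ 1. Define f(a,b) = 0 if a ≥ 0 and b ≥ 0; f(a,b) = max{0, −b − β·a} if a ≥ 0 > b; f(a,b) = max{0, −a − β·b} if b ≥ 0 > a; and f(a,b) = −a − b if a < 0 and b < 0. Then for every initial state (σ₁,σ₂) ∈ [0,S_max]², J*_k(σ₁,σ₂) = Σ_{t=k}^{N} f(E₁(t), E₂(t)). -/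
/-!
Without storage efficiency (`α = 0`) charging only wastes energy and discharging yields
nothing, so the slots decouple into one-slot linear programs in the grid draws `w₁, w₂` and the
transfers `x₁₂, x₂₁`. Adding the two balance constraints, weighted `(1, 1)` when both stations
are in deficit and `(β, 1)` (resp. `(1, β)`) when only the second (resp. first) one is, bounds
`w₁ + w₂` below by `f(E₁, E₂)`. The greedy policy, in which a station in surplus ships all of
its surplus to a station in deficit, which then buys the remaining shortfall, attains it.
-/

open Finset

/-- The optimal one-slot cost `f(a, b)` without storage. -/
noncomputable def noStorageCost (β a b : ℝ) : ℝ :=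
  if 0 ≤ a ∧ 0 ≤ b then 0
  else if 0 ≤ a then max 0 (-b - β * a)
  else if 0 ≤ b then max 0 (-a - β * b)
  else -a - b

theorem noStorageCost_le_add {β a b w₁ w₂ x₁₂ x₂₁ : ℝ} (hβ : 0 ≤ β ∧ β ≤ 1)
    (hw₁ : 0 ≤ w₁) (hw₂ : 0 ≤ w₂) (hx₁₂ : 0 ≤ x₁₂) (hx₂₁ : 0 ≤ x₂₁)
    (h₁ : 0 ≤ a + w₁ - x₁₂ + β * x₂₁) (h₂ : 0 ≤ b + w₂ - x₂₁ + β * x₁₂) :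
    noStorageCost β a b ≤ w₁ + w₂ := by
  obtain ⟨hβ₀, hβ₁⟩ := hβ
  have hββ : β * β ≤ 1 := mul_le_one₀ hβ₁ hβ₀ hβ₁
  unfold noStorageCost
  split_ifs
  · positivity
  · refine max_le (by positivity) ?_
    linarith [mul_nonneg hβ₀ h₁, mul_le_of_le_one_left hw₁ hβ₁,
      mul_le_of_le_one_left hx₂₁ hββ]
  · refine max_le (by positivity) ?_
    linarith [mul_nonneg hβ₀ h₂, mul_le_of_le_one_left hw₂ hβ₁,
      mul_le_of_le_one_left hx₁₂ hββ]
  · linarith [mul_le_of_le_one_left hx₁₂ hβ₁, mul_le_of_le_one_left hx₂₁ hβ₁]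

noncomputable def greedyDraw (β a b : ℝ) : ℝ :=
  if 0 ≤ a then 0 else if 0 ≤ b then max 0 (-a - β * b) else -a

noncomputable def greedyTransfer (a b : ℝ) : ℝ :=
  if 0 ≤ a ∧ b < 0 then a else 0

theorem greedyDraw_nonneg (β a b : ℝ) : 0 ≤ greedyDraw β a b := by
  unfold greedyDraw
  split_ifs
  · exact le_rfl
  · exact le_max_left _ _
  · linarith

theorem greedyTransfer_nonneg (a b : ℝ) : 0 ≤ greedyTransfer a b := by
  unfold greedyTransfer
  split_ifs with h
  · exact h.1
  · exact le_rfl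

theorem greedy_balance (β a b : ℝ) :
    0 ≤ a + greedyDraw β a b - greedyTransfer a b + β * greedyTransfer b a := by
  unfold greedyDraw greedyTransfer
  rcases le_or_gt 0 a with ha | ha <;> rcases le_or_gt 0 b with hb | hb <;>
    simp [ha, hb, not_lt.2, not_le.2]
  all_goals linarith [le_max_right 0 (-a - β * b)]

theorem greedyDraw_add_greedyDraw (β a b : ℝ) :
    greedyDraw β a b + greedyDraw β b a = noStorageCost β a b := by
  unfold greedyDraw noStorageCost
  by_cases ha : 0 ≤ a <;> by_cases hb : 0 ≤ b <;> simp [ha, hb]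
  ring

theorem feasible_greedy {α β Smax σ₁ σ₂ : ℝ} (k N : ℕ) (E₁ E₂ : ℕ → ℝ)
    (hσ₁ : 0 ≤ σ₁ ∧ σ₁ ≤ Smax) (hσ₂ : 0 ≤ σ₂ ∧ σ₂ ≤ Smax) :
    Feasible α β Smax k N E₁ E₂ σ₁ σ₂
      (fun t ↦ greedyDraw β (E₁ t) (E₂ t)) (fun t ↦ greedyDraw β (E₂ t) (E₁ t)) 0 0 0 0
      (fun t ↦ greedyTransfer (E₁ t) (E₂ t)) (fun t ↦ greedyTransfer (E₂ t) (E₁ t))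
      (fun _ ↦ σ₁) (fun _ ↦ σ₂) := by
  refine ⟨rfl, rfl, fun t _ ↦ ?_, fun _ _ ↦ ⟨hσ₁.1, hσ₁.2, hσ₂.1, hσ₂.2⟩⟩
  simpa [greedyDraw_nonneg, greedyTransfer_nonneg, hσ₁.1, hσ₂.1] using
    ⟨greedy_balance β (E₁ t) (E₂ t), greedy_balance β (E₂ t) (E₁ t)⟩

theorem sum_noStorageCost_le {β Smax σ₁ σ₂ : ℝ} {k N : ℕ} {E₁ E₂ : ℕ → ℝ}
    {w₁ w₂ c₁ c₂ d₁ d₂ x₁₂ x₂₁ s₁ s₂ : ℕ → ℝ} (hβ : 0 ≤ β ∧ β ≤ 1)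
    (h : Feasible 0 β Smax k N E₁ E₂ σ₁ σ₂ w₁ w₂ c₁ c₂ d₁ d₂ x₁₂ x₂₁ s₁ s₂) :
    ∑ t ∈ Icc k N, noStorageCost β (E₁ t) (E₂ t) ≤ ∑ t ∈ Icc k N, (w₁ t + w₂ t) := by
  refine sum_le_sum fun t ht ↦ ?_
  obtain ⟨hw₁, hw₂, hc₁, hc₂, -, -, hx₁₂, hx₂₁, -, -, -, -, h₁, h₂⟩ := h.2.2.1 t ht
  exact noStorageCost_le_add hβ hw₁ hw₂ hx₁₂ hx₂₁ (by linarith) (by linarith)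

theorem no_storage_closed_form_general
    (β Smax : ℝ) (hβ : 0 ≤ β ∧ β ≤ 1)
    (k N : ℕ) (E₁ E₂ : ℕ → ℝ)
    (σ₁ σ₂ : ℝ) (hσ₁ : 0 ≤ σ₁ ∧ σ₁ ≤ Smax) (hσ₂ : 0 ≤ σ₂ ∧ σ₂ ≤ Smax) :
    Jstar 0 β Smax k N E₁ E₂ σ₁ σ₂ =
      ∑ t ∈ Finset.Icc k N,
        (if 0 ≤ E₁ t ∧ 0 ≤ E₂ t then 0
         else if 0 ≤ E₁ t then max 0 (-(E₂ t) - β * E₁ t)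
         else if 0 ≤ E₂ t then max 0 (-(E₁ t) - β * E₂ t)
         else -(E₁ t) - E₂ t) := by
  change sInf _ = ∑ t ∈ Icc k N, noStorageCost β (E₁ t) (E₂ t)
  refine IsLeast.csInf_eq ⟨⟨_, _, _, _, _, _, _, _, _, _, feasible_greedy k N E₁ E₂ hσ₁ hσ₂,
    sum_congr rfl fun t _ ↦ greedyDraw_add_greedyDraw β (E₁ t) (E₂ t)⟩, ?_⟩
  rintro r ⟨w₁, w₂, c₁, c₂, d₁, d₂, x₁₂, x₂₁, s₁, s₂, hfeas, rfl⟩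
  exact sum_noStorageCost_le hβ hfeas

/-- closed form for the optimal cost when there is no storage (α = 0). -/
theorem no_storage_closed_form
    (β Smax : ℝ) (hβ : 0 ≤ β ∧ β ≤ 1) (hS : 0 < Smax)
    (k N : ℕ) (hkN : k ≤ N) (E₁ E₂ : ℕ → ℝ)
    (σ₁ σ₂ : ℝ) (hσ₁ : 0 ≤ σ₁ ∧ σ₁ ≤ Smax) (hσ₂ : 0 ≤ σ₂ ∧ σ₂ ≤ Smax) :
    Jstar 0 β Smax k N E₁ E₂ σ₁ σ₂ =
      ∑ t ∈ Finset.Icc k N,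
        (if 0 ≤ E₁ t ∧ 0 ≤ E₂ t then 0
         else if 0 ≤ E₁ t then max 0 (-(E₂ t) - β * E₁ t)
         else if 0 ≤ E₂ t then max 0 (-(E₁ t) - β * E₂ t)
         else -(E₁ t) - E₂ t) :=
  no_storage_closed_form_general β Smax hβ k N E₁ E₂ σ₁ σ₂ hσ₁ hσ₂
end

section
/- (Claim: no charging at BS 2 is needed when transferred energy does not cover the deficit.) Suppose 0 < α ≤ 1, 0 < β ≤ 1, (s₁,s₂) ∈ [0,S_max]², E₁ ≥ 0 > E₂. For any one-step feasible action with w₁ = w₂ = 0, β·x₁₂ ≤ −E₂, and c₂ > 0, there exists a one-step feasible action with the same grid draw (w₁' = w₂' = 0), with c₂' = 0, and whose next-state storage sum (s₁ + α·c₁' − d₁') + (s₂ + α·c₂' − d₂') is at least the next-state storage sum of the original action. -/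
/-!
Without grid draw, and with the transfer from BS 1 not covering the deficit of BS 2, BS 2 can
only charge from its own discharge: `c₂ ≤ α d₂`. Charging `c₂` at BS 2 can then be replaced by
discharging `c₂ / α` less, which leaves the energy balance of BS 2 unchanged and, as
`α c₂ ≤ c₂ ≤ c₂ / α`, leaves at least as much energy in its storage.
-/

lemma mul_le_div_self_of_le_one {α c : ℝ} (hα : 0 < α) (hα₁ : α ≤ 1) (hc : 0 ≤ c) :
    α * c ≤ c / α :=
  (mul_le_of_le_one_left hc hα₁).trans (le_div_self hc hα hα₁)

namespace OneStep

variable {α β Smax s₁ s₂ E₁ E₂ w₁ w₂ c₁ c₂ d₁ d₂ x₁₂ x₂₁ : ℝ}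

lemma charge₂_le_of_transfer_le_deficit
    (h : OneStep α β Smax s₁ s₂ E₁ E₂ w₁ w₂ c₁ c₂ d₁ d₂ x₁₂ x₂₁) (hw₂ : w₂ = 0)
    (hx : β * x₁₂ ≤ -E₂) :
    c₂ ≤ α * d₂ := by
  obtain ⟨-, -, -, -, -, -, -, hx₂₁, -, -, -, -, -, -, -, hbal₂⟩ := h
  linarith

lemma charge₂_to_discharge₂ (hα : 0 < α) (hα₁ : α ≤ 1) (hs₂ : s₂ ≤ Smax)
    (h : OneStep α β Smax s₁ s₂ E₁ E₂ w₁ w₂ c₁ c₂ d₁ d₂ x₁₂ x₂₁) (hc₂ : c₂ ≤ α * d₂) :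
    OneStep α β Smax s₁ s₂ E₁ E₂ w₁ w₂ c₁ 0 d₁ (d₂ - c₂ / α) x₁₂ x₂₁ := by
  obtain ⟨hw₁, hw₂, hc₁, hc₂₀, hd₁, hd₂, hx₁₂, hx₂₁, hd₁s, hd₂s,
    hlo₁, hhi₁, hlo₂, hhi₂, hbal₁, hbal₂⟩ := h
  have hdiv : c₂ / α ≤ d₂ := (div_le_iff₀' hα).2 hc₂
  have hdiv₀ : 0 ≤ c₂ / α := div_nonneg hc₂₀ hα.le
  have hstore := mul_le_div_self_of_le_one hα hα₁ hc₂₀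
  have hbal : α * (d₂ - c₂ / α) = α * d₂ - c₂ := by field_simp
  refine ⟨hw₁, hw₂, hc₁, le_rfl, hd₁, by linarith, hx₁₂, hx₂₁, hd₁s, by linarith,
    hlo₁, hhi₁, by linarith, by linarith, hbal₁, by linarith⟩

lemma storage₂_le_charge₂_to_discharge₂ (hα : 0 < α) (hα₁ : α ≤ 1)
    (h : OneStep α β Smax s₁ s₂ E₁ E₂ w₁ w₂ c₁ c₂ d₁ d₂ x₁₂ x₂₁) :
    s₂ + α * c₂ - d₂ ≤ s₂ + α * 0 - (d₂ - c₂ / α) := by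
  obtain ⟨-, -, -, hc₂, -⟩ := h
  linarith [mul_le_div_self_of_le_one hα hα₁ hc₂]

end OneStep

theorem no_charging_at_BS2_needed_general
    (α β Smax : ℝ) (hα : 0 < α ∧ α ≤ 1)
    (s₁ s₂ : ℝ) (hs₂ : 0 ≤ s₂ ∧ s₂ ≤ Smax)
    (E₁ E₂ : ℝ)
    (w₁ w₂ c₁ c₂ d₁ d₂ x₁₂ x₂₁ : ℝ)
    (hfeas : OneStep α β Smax s₁ s₂ E₁ E₂ w₁ w₂ c₁ c₂ d₁ d₂ x₁₂ x₂₁)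
    (hw₁ : w₁ = 0) (hw₂ : w₂ = 0)
    (hx : β * x₁₂ ≤ -E₂) :
    ∃ c₁' c₂' d₁' d₂' x₁₂' x₂₁' : ℝ,
      OneStep α β Smax s₁ s₂ E₁ E₂ 0 0 c₁' c₂' d₁' d₂' x₁₂' x₂₁' ∧
      c₂' = 0 ∧
      (s₁ + α * c₁ - d₁) + (s₂ + α * c₂ - d₂) ≤
        (s₁ + α * c₁' - d₁') + (s₂ + α * c₂' - d₂') := by
  have hc₂ := hfeas.charge₂_le_of_transfer_le_deficit hw₂ hx
  have hstore := hfeas.storage₂_le_charge₂_to_discharge₂ hα.1 hα.2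
  subst hw₁ hw₂
  refine ⟨c₁, 0, d₁, d₂ - c₂ / α, x₁₂, x₂₁,
    hfeas.charge₂_to_discharge₂ hα.1 hα.2 hs₂.2 hc₂, rfl, ?_⟩
  linarith

/-- Claim in Case 2.2: if the transferred energy does not cover the
deficit and no grid energy is drawn, charging BS 2 can be removed without decreasing
the next-state storage sum. -/
theorem no_charging_at_BS2_needed
    (α β Smax : ℝ) (hα : 0 < α ∧ α ≤ 1) (hβ : 0 < β ∧ β ≤ 1) (hS : 0 < Smax)
    (s₁ s₂ : ℝ) (hs₁ : 0 ≤ s₁ ∧ s₁ ≤ Smax) (hs₂ : 0 ≤ s₂ ∧ s₂ ≤ Smax)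
    (E₁ E₂ : ℝ) (hE₁ : 0 ≤ E₁) (hE₂ : E₂ < 0)
    (w₁ w₂ c₁ c₂ d₁ d₂ x₁₂ x₂₁ : ℝ)
    (hfeas : OneStep α β Smax s₁ s₂ E₁ E₂ w₁ w₂ c₁ c₂ d₁ d₂ x₁₂ x₂₁)
    (hw₁ : w₁ = 0) (hw₂ : w₂ = 0)
    (hx : β * x₁₂ ≤ -E₂) (hc₂ : 0 < c₂) :
    ∃ c₁' c₂' d₁' d₂' x₁₂' x₂₁' : ℝ,
      OneStep α β Smax s₁ s₂ E₁ E₂ 0 0 c₁' c₂' d₁' d₂' x₁₂' x₂₁' ∧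
      c₂' = 0 ∧
      (s₁ + α * c₁ - d₁) + (s₂ + α * c₂ - d₂) ≤
        (s₁ + α * c₁' - d₁') + (s₂ + α * c₂' - d₂') :=
  no_charging_at_BS2_needed_general α β Smax hα s₁ s₂ hs₂ E₁ E₂ w₁ w₂ c₁ c₂ d₁ d₂ x₁₂ x₂₁ hfeas hw₁
    hw₂ hx
end

section
/- (Case 2.2 of the greedy algorithm with β ≥ α².) Suppose 0 < α ≤ 1, 0 < β ≤ 1 with β ≥ α², (s₁,s₂) ∈ [0,S_max]², E₁ ≥ 0, E₂ < 0, and β·E₁ ≤ −E₂ < β·E₁ + α·s₂. Then the one-step minimal grid draw is V₁(s₁,s₂,E₁,E₂) = 0, and the supremum of the next-state storage sum (s₁ + α·c₁ − d₁) + (s₂ + α·c₂ − d₂) over one-step feasible actions with grid draw 0 equals s₁ + s₂ + (β·E₁ + E₂)/α. -/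
section OneStep

variable {α β Smax s₁ s₂ E₁ E₂ w₁ w₂ c₁ c₂ d₁ d₂ x₁₂ x₂₁ : ℝ}

theorem OneStep.mul_storage_change_le (h : OneStep α β Smax s₁ s₂ E₁ E₂ w₁ w₂ c₁ c₂ d₁ d₂ x₁₂ x₂₁)
    (hα : 0 ≤ α) (hαβ : α ^ 2 ≤ β) (hβ : β ≤ 1) :
    α * ((α * c₁ - d₁) + (α * c₂ - d₂)) ≤ β * E₁ + E₂ + β * w₁ + w₂ := by
  obtain ⟨-, -, hc₁, hc₂, hd₁, -, -, hx₂₁, -, -, -, -, -, -, he₁, he₂⟩ := h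
  have hβ0 : 0 ≤ β := (sq_nonneg α).trans hαβ
  have hα1 : α ^ 2 ≤ 1 := hαβ.trans hβ
  have : 0 ≤ β * (E₁ + w₁ - c₁ + α * d₁ - x₁₂ + β * x₂₁) := mul_nonneg hβ0 he₁
  have : 0 ≤ (β - α ^ 2) * c₁ := mul_nonneg (by linarith) hc₁
  have : 0 ≤ (1 - α ^ 2) * c₂ := mul_nonneg (by linarith) hc₂
  have : 0 ≤ α * (1 - β) * d₁ := mul_nonneg (mul_nonneg hα (by linarith)) hd₁
  have : 0 ≤ (1 - β ^ 2) * x₂₁ := mul_nonneg (by nlinarith) hx₂₁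
  linarith

theorem OneStep.storage_sum_le_of_draw_eq_zero
    (h : OneStep α β Smax s₁ s₂ E₁ E₂ w₁ w₂ c₁ c₂ d₁ d₂ x₁₂ x₂₁) (hw : w₁ + w₂ = 0)
    (hα : 0 < α) (hαβ : α ^ 2 ≤ β) (hβ : β ≤ 1) :
    (s₁ + α * c₁ - d₁) + (s₂ + α * c₂ - d₂) ≤ s₁ + s₂ + (β * E₁ + E₂) / α := by
  have hw₁ : w₁ = 0 := by linarith [h.1, h.2.1]
  have hw₂ : w₂ = 0 := by linarith
  have key := h.mul_storage_change_le hα.le hαβ hβ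
  rw [hw₁, hw₂] at key
  have : (α * c₁ - d₁) + (α * c₂ - d₂) ≤ (β * E₁ + E₂) / α := by
    rw [le_div_iff₀ hα]; linarith
  linarith

end OneStep

theorem oneStep_export_discharge {α β Smax s₁ s₂ E₁ E₂ d : ℝ}
    (hs₁ : 0 ≤ s₁ ∧ s₁ ≤ Smax) (hs₂ : s₂ ≤ Smax) (hE₁ : 0 ≤ E₁)
    (hd : 0 ≤ d ∧ d ≤ s₂) (hbal : 0 ≤ E₂ + α * d + β * E₁) :
    OneStep α β Smax s₁ s₂ E₁ E₂ 0 0 0 0 0 d E₁ 0 := by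
  refine ⟨le_rfl, le_rfl, le_rfl, le_rfl, le_rfl, hd.1, hE₁, le_rfl, hs₁.1, hd.2,
    ?_, ?_, ?_, ?_, ?_, ?_⟩ <;> linarith

theorem V1_eq_zero_of_oneStep {α β Smax s₁ s₂ E₁ E₂ w₁ w₂ c₁ c₂ d₁ d₂ x₁₂ x₂₁ : ℝ}
    (h : OneStep α β Smax s₁ s₂ E₁ E₂ w₁ w₂ c₁ c₂ d₁ d₂ x₁₂ x₂₁) (hw : w₁ + w₂ = 0) :
    V1 α β Smax s₁ s₂ E₁ E₂ = 0 := by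
  refine IsLeast.csInf_eq ⟨⟨w₁, w₂, c₁, c₂, d₁, d₂, x₁₂, x₂₁, h, hw⟩, ?_⟩
  rintro r ⟨v₁, v₂, _, _, _, _, _, _, hv, rfl⟩
  exact add_nonneg hv.1 hv.2.1

theorem case22_beta_ge_alpha_sq_general
    (α β Smax : ℝ) (hα : 0 < α ∧ α ≤ 1) (hβ : 0 < β ∧ β ≤ 1) (hβα : β ≥ α ^ 2)
    (s₁ s₂ : ℝ) (hs₁ : 0 ≤ s₁ ∧ s₁ ≤ Smax) (hs₂ : 0 ≤ s₂ ∧ s₂ ≤ Smax)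
    (E₁ E₂ : ℝ) (hE₁ : 0 ≤ E₁)
    (hlo : β * E₁ ≤ -E₂) (hhi : -E₂ < β * E₁ + α * s₂) :
    V1 α β Smax s₁ s₂ E₁ E₂ = 0 ∧
      sSup {r : ℝ | ∃ w₁ w₂ c₁ c₂ d₁ d₂ x₁₂ x₂₁ : ℝ,
          OneStep α β Smax s₁ s₂ E₁ E₂ w₁ w₂ c₁ c₂ d₁ d₂ x₁₂ x₂₁ ∧
          w₁ + w₂ = 0 ∧
          (s₁ + α * c₁ - d₁) + (s₂ + α * c₂ - d₂) = r} =
        s₁ + s₂ + (β * E₁ + E₂) / α := by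
  have hα0 := hα.1
  set d := (-E₂ - β * E₁) / α
  have hαd : α * d = -E₂ - β * E₁ := mul_div_cancel₀ _ hα0.ne'
  have hd : 0 ≤ d ∧ d ≤ s₂ :=
    ⟨div_nonneg (by linarith) hα0.le, (div_le_iff₀ hα0).2 (by linarith)⟩
  have hopt := oneStep_export_discharge (α := α) (β := β) (E₂ := E₂) hs₁ hs₂.2 hE₁ hd
    (by linarith)
  refine ⟨V1_eq_zero_of_oneStep hopt (add_zero 0), IsGreatest.csSup_eq ⟨?_, ?_⟩⟩
  · refine ⟨0, 0, 0, 0, 0, d, E₁, 0, hopt, add_zero 0, ?_⟩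
    have : (β * E₁ + E₂) / α = -d := by rw [div_eq_iff hα0.ne']; linarith
    rw [this]
    ring
  · rintro r ⟨w₁, w₂, c₁, c₂, d₁, d₂, x₁₂, x₂₁, h, hw, rfl⟩
    exact h.storage_sum_le_of_draw_eq_zero hw hα0 hβα hβ.2

/-- Case 2.2 with β ≥ α²: zero grid draw suffices, and the maximal
next-state storage sum equals `s₁ + s₂ + (β·E₁ + E₂)/α`. -/
theorem case22_beta_ge_alpha_sq
    (α β Smax : ℝ) (hα : 0 < α ∧ α ≤ 1) (hβ : 0 < β ∧ β ≤ 1) (hβα : β ≥ α ^ 2)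
    (hS : 0 < Smax)
    (s₁ s₂ : ℝ) (hs₁ : 0 ≤ s₁ ∧ s₁ ≤ Smax) (hs₂ : 0 ≤ s₂ ∧ s₂ ≤ Smax)
    (E₁ E₂ : ℝ) (hE₁ : 0 ≤ E₁) (hE₂ : E₂ < 0)
    (hlo : β * E₁ ≤ -E₂) (hhi : -E₂ < β * E₁ + α * s₂) :
    V1 α β Smax s₁ s₂ E₁ E₂ = 0 ∧
      sSup {r : ℝ | ∃ w₁ w₂ c₁ c₂ d₁ d₂ x₁₂ x₂₁ : ℝ,
          OneStep α β Smax s₁ s₂ E₁ E₂ w₁ w₂ c₁ c₂ d₁ d₂ x₁₂ x₂₁ ∧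
          w₁ + w₂ = 0 ∧
          (s₁ + α * c₁ - d₁) + (s₂ + α * c₂ - d₂) = r} =
        s₁ + s₂ + (β * E₁ + E₂) / α :=
  case22_beta_ge_alpha_sq_general α β Smax hα hβ hβα s₁ s₂ hs₁ hs₂ E₁ E₂ hE₁ hlo hhi
end

section
/- (Case 2.2 of the greedy algorithm with β < α².) Suppose 0 < α ≤ 1, 0 < β ≤ 1 with β < α², (s₁,s₂) ∈ [0,S_max]², E₁ ≥ 0, E₂ < 0, and β·E₁ ≤ −E₂ < β·E₁ + α·s₂. Let Δ* = min{E₁, (S_max − s₁)/α, E₁ − (−E₂ − α·s₂)/β}. Then the one-step minimal grid draw is V₁(s₁,s₂,E₁,E₂) = 0, and the supremum of the next-state storage sum (s₁ + α·c₁ − d₁) + (s₂ + α·c₂ − d₂) over one-step feasible actions with grid draw 0 equals s₁ + s₂ + (β·E₁ + E₂)/α + (α − β/α)·Δ*. -/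
/-- The storage sum reached by charging `t` into battery 1, shipping the rest `E₁ - t` of
node 1's surplus to node 2, and covering node 2's remaining deficit from battery 2. -/
noncomputable def greedyStorage (α β s₁ s₂ E₁ E₂ t : ℝ) : ℝ :=
  s₁ + s₂ + (β * E₁ + E₂) / α + (α - β / α) * t

def zeroDrawStorage (α β Smax s₁ s₂ E₁ E₂ : ℝ) : Set ℝ :=
  {r : ℝ | ∃ w₁ w₂ c₁ c₂ d₁ d₂ x₁₂ x₂₁ : ℝ,
    OneStep α β Smax s₁ s₂ E₁ E₂ w₁ w₂ c₁ c₂ d₁ d₂ x₁₂ x₂₁ ∧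
    w₁ + w₂ = 0 ∧
    (s₁ + α * c₁ - d₁) + (s₂ + α * c₂ - d₂) = r}

section

variable {α β Smax s₁ s₂ E₁ E₂ : ℝ}

theorem mul_greedyStorage (hα : α ≠ 0) (t : ℝ) :
    α * greedyStorage α β s₁ s₂ E₁ E₂ t =
      α * (s₁ + s₂) + β * E₁ + E₂ + (α ^ 2 - β) * t := by
  unfold greedyStorage
  field_simp
  ring

theorem V1_eq_zero_of_nonempty_zeroDrawStorage
    (h : (zeroDrawStorage α β Smax s₁ s₂ E₁ E₂).Nonempty) :
    V1 α β Smax s₁ s₂ E₁ E₂ = 0 := by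
  obtain ⟨-, w₁, w₂, c₁, c₂, d₁, d₂, x₁₂, x₂₁, hfeas, hw, -⟩ := h
  refine IsLeast.csInf_eq ⟨⟨w₁, w₂, c₁, c₂, d₁, d₂, x₁₂, x₂₁, hfeas, hw⟩, ?_⟩
  rintro r ⟨_, _, _, _, _, _, _, _, ⟨hw₁, hw₂, -⟩, rfl⟩
  exact add_nonneg hw₁ hw₂

theorem greedyStorage_mem_zeroDrawStorage (hα : 0 < α) (hs₁ : 0 ≤ s₁) (hs₂ : s₂ ≤ Smax)
    {t : ℝ} (ht : 0 ≤ t) (htE : t ≤ E₁) (htS : α * t ≤ Smax - s₁)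
    (hdeficit : β * (E₁ - t) ≤ -E₂) (hreserve : -E₂ - β * (E₁ - t) ≤ α * s₂) :
    greedyStorage α β s₁ s₂ E₁ E₂ t ∈ zeroDrawStorage α β Smax s₁ s₂ E₁ E₂ := by
  set d := (-E₂ - β * (E₁ - t)) / α
  have hαd : α * d = -E₂ - β * (E₁ - t) := mul_div_cancel₀ _ hα.ne'
  have hd0 : 0 ≤ d := div_nonneg (by linarith) hα.le
  have hds : d ≤ s₂ := (div_le_iff₀' hα).2 hreserve
  have hαt : 0 ≤ α * t := mul_nonneg hα.le ht
  refine ⟨0, 0, t, 0, 0, d, E₁ - t, 0, ?_, add_zero 0, ?_⟩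
  · refine ⟨le_rfl, le_rfl, ht, le_rfl, le_rfl, hd0, sub_nonneg.2 htE, le_rfl, hs₁, hds,
      ?_, ?_, ?_, ?_, ?_, ?_⟩ <;> linarith
  · refine mul_left_cancel₀ hα.ne' ?_
    rw [mul_greedyStorage hα.ne']
    linear_combination -hαd

theorem exists_oneStep_of_mem_zeroDrawStorage {r : ℝ}
    (hr : r ∈ zeroDrawStorage α β Smax s₁ s₂ E₁ E₂) :
    ∃ c₁ c₂ d₁ d₂ x₁₂ x₂₁ : ℝ, OneStep α β Smax s₁ s₂ E₁ E₂ 0 0 c₁ c₂ d₁ d₂ x₁₂ x₂₁ ∧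
      (s₁ + α * c₁ - d₁) + (s₂ + α * c₂ - d₂) = r := by
  obtain ⟨w₁, w₂, c₁, c₂, d₁, d₂, x₁₂, x₂₁, hfeas, hw, hr⟩ := hr
  obtain ⟨rfl, rfl⟩ : w₁ = 0 ∧ w₂ = 0 := by
    constructor <;> linarith [hfeas.1, hfeas.2.1]
  exact ⟨c₁, c₂, d₁, d₂, x₁₂, x₂₁, hfeas, hr⟩

theorem le_greedyStorage_surplus {r : ℝ} (hr : r ∈ zeroDrawStorage α β Smax s₁ s₂ E₁ E₂)
    (hα : 0 < α) (hα1 : α ≤ 1) (hβ : 0 ≤ β) (hβ1 : β ≤ 1)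
    (hβα : β ≤ α ^ 2) : r ≤ greedyStorage α β s₁ s₂ E₁ E₂ E₁ := by
  obtain ⟨c₁, c₂, d₁, d₂, x₁₂, x₂₁, ⟨-, -, -, hc₂, hd₁, -, hx₁₂, hx₂₁, -, -, -, -, -, -, h₁, h₂⟩,
    rfl⟩ := exists_oneStep_of_mem_zeroDrawStorage hr
  have hα2 : α ^ 2 ≤ 1 := pow_le_one₀ hα.le hα1
  rw [← mul_le_mul_iff_right₀ hα, mul_greedyStorage hα.ne']
  linear_combination α ^ 2 * h₁ + h₂ + mul_nonneg (sub_nonneg.2 hβα) hx₁₂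
    + mul_nonneg (sub_nonneg.2 (mul_le_one₀ hα2 hβ hβ1)) hx₂₁
    + mul_nonneg (sub_nonneg.2 hα2) hc₂ + mul_nonneg (mul_nonneg hα.le (sub_nonneg.2 hα2)) hd₁

theorem le_greedyStorage_full {r : ℝ} (hr : r ∈ zeroDrawStorage α β Smax s₁ s₂ E₁ E₂)
    (hα : 0 < α) (hα1 : α ≤ 1) (hβ : 0 ≤ β) (hβ1 : β ≤ 1)
    (hβα : β ≤ α ^ 2) {t : ℝ} (ht : α * t = Smax - s₁) :
    r ≤ greedyStorage α β s₁ s₂ E₁ E₂ t := by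
  obtain ⟨c₁, c₂, d₁, d₂, x₁₂, x₂₁, ⟨-, -, -, hc₂, hd₁, -, -, hx₂₁, -, -, -, hfull, -, -, h₁, h₂⟩,
    rfl⟩ := exists_oneStep_of_mem_zeroDrawStorage hr
  have hα2 : α ^ 2 ≤ 1 := pow_le_one₀ hα.le hα1
  have hβ2 : β ^ 2 ≤ 1 := pow_le_one₀ hβ hβ1
  rw [← mul_le_mul_iff_right₀ hα, ← mul_le_mul_iff_right₀ hα, mul_greedyStorage hα.ne']
  linear_combination α * β * h₁ + α * h₂ + (β - α ^ 2) * ht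
    + mul_nonneg (sub_nonneg.2 hβα) (sub_nonneg.2 hfull)
    + mul_nonneg (mul_nonneg hα.le (sub_nonneg.2 hβ2)) hx₂₁
    + mul_nonneg (mul_nonneg hα.le (sub_nonneg.2 hα2)) hc₂
    + mul_nonneg (mul_nonneg hβ (sub_nonneg.2 hα2)) hd₁

theorem le_greedyStorage_empty {r : ℝ} (hr : r ∈ zeroDrawStorage α β Smax s₁ s₂ E₁ E₂)
    (hα : 0 < α) (hα1 : α ≤ 1) (hβ : 0 < β) (hβ1 : β ≤ 1)
    (hβα : β ≤ α ^ 2) {t : ℝ} (ht : β * t = β * E₁ + E₂ + α * s₂) :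
    r ≤ greedyStorage α β s₁ s₂ E₁ E₂ t := by
  obtain ⟨c₁, c₂, d₁, d₂, x₁₂, x₂₁, ⟨-, -, -, hc₂, hd₁, -, -, hx₂₁, -, hempty, -, -, -, -, h₁, h₂⟩,
    rfl⟩ := exists_oneStep_of_mem_zeroDrawStorage hr
  have hα2 : α ^ 2 ≤ 1 := pow_le_one₀ hα.le hα1
  have hβ2 : β ^ 2 ≤ 1 := pow_le_one₀ hβ.le hβ1
  rw [← mul_le_mul_iff_right₀ hα, ← mul_le_mul_iff_right₀ hβ, mul_greedyStorage hα.ne']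
  linear_combination α ^ 2 * β * h₁ + α ^ 2 * h₂ + (β - α ^ 2) * ht
    + mul_nonneg (mul_nonneg hα.le (sub_nonneg.2 hβα)) (sub_nonneg.2 hempty)
    + α ^ 2 * mul_nonneg (sub_nonneg.2 hβ2) hx₂₁
    + α ^ 2 * mul_nonneg (sub_nonneg.2 hβ1) hc₂
    + α * mul_nonneg (mul_nonneg hβ.le (sub_nonneg.2 hα2)) hd₁

theorem isGreatest_zeroDrawStorage (hα : 0 < α) (hα1 : α ≤ 1) (hβ : 0 < β) (hβ1 : β ≤ 1)
    (hβα : β ≤ α ^ 2) (hs₁ : 0 ≤ s₁) (hs₁S : s₁ ≤ Smax) (hs₂ : s₂ ≤ Smax) (hE₁ : 0 ≤ E₁)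
    (hlo : β * E₁ ≤ -E₂) (hhi : -E₂ ≤ β * E₁ + α * s₂) :
    IsGreatest (zeroDrawStorage α β Smax s₁ s₂ E₁ E₂)
      (greedyStorage α β s₁ s₂ E₁ E₂
        (min E₁ (min ((Smax - s₁) / α) (E₁ - (-E₂ - α * s₂) / β)))) := by
  set tfull := (Smax - s₁) / α
  set tempty := E₁ - (-E₂ - α * s₂) / β
  have hfull : α * tfull = Smax - s₁ := mul_div_cancel₀ _ hα.ne'
  have hempty : β * tempty = β * E₁ + E₂ + α * s₂ := by
    rw [mul_sub, mul_div_cancel₀ _ hβ.ne']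
    ring
  set t := min E₁ (min tfull tempty)
  have htE : t ≤ E₁ := min_le_left _ _
  have htfull : t ≤ tfull := (min_le_right _ _).trans (min_le_left _ _)
  have htempty : t ≤ tempty := (min_le_right _ _).trans (min_le_right _ _)
  have ht : 0 ≤ t := by
    refine le_min hE₁ (le_min (div_nonneg (sub_nonneg.2 hs₁S) hα.le) ?_)
    rw [sub_nonneg, div_le_iff₀ hβ]
    linarith
  refine ⟨greedyStorage_mem_zeroDrawStorage hα hs₁ hs₂ ht htE ?_ ?_ ?_, fun r hr => ?_⟩
  · exact (mul_le_mul_of_nonneg_left htfull hα.le).trans hfull.le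
  · linarith [mul_nonneg hβ.le ht]
  · linarith [mul_le_mul_of_nonneg_left htempty hβ.le]
  · rcases min_choice E₁ (min tfull tempty) with h | h <;> rw [show t = _ from h]
    · exact le_greedyStorage_surplus hr hα hα1 hβ.le hβ1 hβα
    rcases min_choice tfull tempty with h | h <;> rw [h]
    · exact le_greedyStorage_full hr hα hα1 hβ.le hβ1 hβα hfull
    · exact le_greedyStorage_empty hr hα hα1 hβ hβ1 hβα hempty

end

theorem case22_beta_lt_alpha_sq_general
    (α β Smax : ℝ) (hα : 0 < α ∧ α ≤ 1) (hβ : 0 < β ∧ β ≤ 1) (hβα : β < α ^ 2)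
    (s₁ s₂ : ℝ) (hs₁ : 0 ≤ s₁ ∧ s₁ ≤ Smax) (hs₂ : 0 ≤ s₂ ∧ s₂ ≤ Smax)
    (E₁ E₂ : ℝ) (hE₁ : 0 ≤ E₁)
    (hlo : β * E₁ ≤ -E₂) (hhi : -E₂ < β * E₁ + α * s₂)
    (Δstar : ℝ)
    (hΔstar : Δstar = min E₁ (min ((Smax - s₁) / α) (E₁ - (-E₂ - α * s₂) / β))) :
    V1 α β Smax s₁ s₂ E₁ E₂ = 0 ∧
      sSup {r : ℝ | ∃ w₁ w₂ c₁ c₂ d₁ d₂ x₁₂ x₂₁ : ℝ,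
          OneStep α β Smax s₁ s₂ E₁ E₂ w₁ w₂ c₁ c₂ d₁ d₂ x₁₂ x₂₁ ∧
          w₁ + w₂ = 0 ∧
          (s₁ + α * c₁ - d₁) + (s₂ + α * c₂ - d₂) = r} =
        s₁ + s₂ + (β * E₁ + E₂) / α + (α - β / α) * Δstar := by
  have hgreatest := isGreatest_zeroDrawStorage hα.1 hα.2 hβ.1 hβ.2 hβα.le hs₁.1 hs₁.2 hs₂.2 hE₁
    hlo hhi.le
  rw [← hΔstar] at hgreatest
  exact ⟨V1_eq_zero_of_nonempty_zeroDrawStorage ⟨_, hgreatest.1⟩, hgreatest.csSup_eq⟩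

/-- Case 2.2 with β < α²: zero grid draw suffices, and the maximal
next-state storage sum equals `s₁ + s₂ + (β·E₁ + E₂)/α + (α − β/α)·Δ*`. -/
theorem case22_beta_lt_alpha_sq
    (α β Smax : ℝ) (hα : 0 < α ∧ α ≤ 1) (hβ : 0 < β ∧ β ≤ 1) (hβα : β < α ^ 2)
    (hS : 0 < Smax)
    (s₁ s₂ : ℝ) (hs₁ : 0 ≤ s₁ ∧ s₁ ≤ Smax) (hs₂ : 0 ≤ s₂ ∧ s₂ ≤ Smax)
    (E₁ E₂ : ℝ) (hE₁ : 0 ≤ E₁) (hE₂ : E₂ < 0)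
    (hlo : β * E₁ ≤ -E₂) (hhi : -E₂ < β * E₁ + α * s₂)
    (Δstar : ℝ)
    (hΔstar : Δstar = min E₁ (min ((Smax - s₁) / α) (E₁ - (-E₂ - α * s₂) / β))) :
    V1 α β Smax s₁ s₂ E₁ E₂ = 0 ∧
      sSup {r : ℝ | ∃ w₁ w₂ c₁ c₂ d₁ d₂ x₁₂ x₂₁ : ℝ,
          OneStep α β Smax s₁ s₂ E₁ E₂ w₁ w₂ c₁ c₂ d₁ d₂ x₁₂ x₂₁ ∧
          w₁ + w₂ = 0 ∧
          (s₁ + α * c₁ - d₁) + (s₂ + α * c₂ - d₂) = r} =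
        s₁ + s₂ + (β * E₁ + E₂) / α + (α - β / α) * Δstar :=
  case22_beta_lt_alpha_sq_general α β Smax hα hβ hβα s₁ s₂ hs₁ hs₂ E₁ E₂ hE₁ hlo hhi Δstar hΔstar
end
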